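/- arXiv:1602.06820 — 10 statements merged into one kernel-verified Lean document; each statement's English description precedes it below -/
import Mathlib

section
/- A code C ⊆ 𝔽₂ⁿ is a b-burst-deletion-correcting code if and only if it is a b-burst-insertion-correcting code. -/
/-- The `b`-burst-deletion ball of `x`: all vectors obtained from `x` by deleting
`b` consecutive coordinates. -/
def delBall (b : ℕ) {n : ℕ} (x : Fin n → Bool) : Set (Fin (n - b) → Bool) :=
  { y | ∃ i ≤ n - b, ∀ j : Fin (n - b),
      y j = if (j : ℕ) < i
        then x ⟨(j : ℕ), by have := j.isLt; omega⟩
        else x ⟨(j : ℕ) + b, by have := j.isLt; omega⟩ }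

/-- The `b`-burst-insertion ball of `x`: all vectors `v` of length `n + b`
such that `x` is obtained from `v` by deleting `b` consecutive coordinates. -/
def insBall (b : ℕ) {n : ℕ} (x : Fin n → Bool) : Set (Fin (n + b) → Bool) :=
  { v | ∃ i ≤ n, ∀ j : Fin n,
      x j = if (j : ℕ) < i
        then v ⟨(j : ℕ), by have := j.isLt; omega⟩
        else v ⟨(j : ℕ) + b, by have := j.isLt; omega⟩ }

/-- Number of runs (maximal blocks of consecutive equal coordinates) of a binary vector. -/
def numRuns {m : ℕ} (z : Fin m → Bool) : ℕ :=
  (Finset.univ.filter (fun i : Fin m =>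
    (i : ℕ) = 0 ∨ z i ≠ z ⟨(i : ℕ) - 1, by have := i.isLt; omega⟩)).card

/-- Every run of `z` has length at most `f`: every window of `f + 1` consecutive
coordinates contains two different values. -/
def maxRunLe {m : ℕ} (f : ℕ) (z : Fin m → Bool) : Prop :=
  ∀ i : ℕ, ∀ hi : i + f < m, ∃ j : ℕ, ∃ hj : j ≤ f,
    z ⟨i + j, by omega⟩ ≠ z ⟨i, by omega⟩

/-- The Varshamov–Tenengolts code `VT_a(n)`. -/
def VT (n a : ℕ) : Set (Fin n → Bool) :=
  { x | (∑ i : Fin n, ((i : ℕ) + 1) * (x i).toNat) ≡ a [MOD n + 1] }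

/-- The shifted Varshamov–Tenengolts code `SVT_{c,d}(n,P)`. -/
def SVT (n P c d : ℕ) : Set (Fin n → Bool) :=
  { x | (∑ i : Fin n, ((i : ℕ) + 1) * (x i).toNat) ≡ c [MOD P] ∧
        (∑ i : Fin n, (x i).toNat) ≡ d [MOD 2] }

/-- The `(2,1)`-burst-correcting code `C_{2,1}(n,a,c)`. -/
def C21 (n a c : ℕ) : Set (Fin n → Bool) :=
  { x | (∑ i : Fin n, (x i).toNat) ≡ c [MOD 4] ∧
        (∑ i : Fin n, ((i : ℕ) + 1) * (x i).toNat) ≡ a [MOD 2 * n - 1] }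

/-- Row `r` (0-indexed) of the `b × (n / b)` array `A_b(x)`: the entry in
column `j` (0-indexed) is `x (j * b + r)`. -/
def arrRow {n : ℕ} (b : ℕ) (x : Fin n → Bool) (r : Fin b) : Fin (n / b) → Bool :=
  fun j => x ⟨(j : ℕ) * b + (r : ℕ), by
    have hj : (j : ℕ) + 1 ≤ n / b := j.isLt
    have hr := r.isLt
    have h1 : ((j : ℕ) + 1) * b ≤ n / b * b := Nat.mul_le_mul_right b hj
    have h2 : n / b * b ≤ n := Nat.div_mul_le_self n b
    have h3 : ((j : ℕ) + 1) * b = (j : ℕ) * b + b := by ring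
    omega⟩

/-- Non-consecutive burst deletion ball: all vectors obtained from `x` by deleting
`a` coordinates whose positions all lie within a window of `b` consecutive positions. -/
def ncDelBall (a b : ℕ) {n : ℕ} (x : Fin n → Bool) : Set (Fin (n - a) → Bool) :=
  { y | ∃ f : Fin (n - a) → Fin n, StrictMono f ∧ (∀ j, y j = x (f j)) ∧
      ∃ i : ℕ, ∀ p : Fin n, p ∉ Set.range f → i ≤ (p : ℕ) ∧ (p : ℕ) < i + b }

/-- Non-consecutive burst insertion ball: all vectors `v` of length `n + a` from which
`x` is obtained by a non-consecutive deletion burst of `a` deletions within a window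
of `b` consecutive positions. -/
def ncInsBall (a b : ℕ) {n : ℕ} (x : Fin n → Bool) : Set (Fin (n + a) → Bool) :=
  { v | ∃ f : Fin n → Fin (n + a), StrictMono f ∧ (∀ j, x j = v (f j)) ∧
      ∃ i : ℕ, ∀ p : Fin (n + a), p ∉ Set.range f → i ≤ (p : ℕ) ∧ (p : ℕ) < i + b }

/-- The vector obtained from `x` by deleting the coordinate at (0-indexed) position `k`. -/
def delOne {n : ℕ} (x : Fin n → Bool) (k : ℕ) : Fin (n - 1) → Bool :=
  fun j => if (j : ℕ) < k
    then x ⟨(j : ℕ), by have := j.isLt; omega⟩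
    else x ⟨(j : ℕ) + 1, by have := j.isLt; omega⟩

/-- The `(2,1)`-burst ball of `x`: all results of deleting two adjacent coordinates
of `x` and inserting one bit at the same position. -/
def d21Ball {n : ℕ} (x : Fin n → Bool) : Set (Fin (n - 1) → Bool) :=
  { y | ∃ i : ℕ, ∃ hi : i + 1 < n, ∃ a : Bool,
      ∀ j : Fin (n - 1), y j =
        if (j : ℕ) < i then x ⟨(j : ℕ), by have := j.isLt; omega⟩
        else if (j : ℕ) = i then a
        else x ⟨(j : ℕ) + 1, by have := j.isLt; omega⟩ }

/-- Extend a vector on `Fin n` to all of `ℕ` by `false`. -/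
private def extBV {n : ℕ} (x : Fin n → Bool) : ℕ → Bool :=
  fun k => if h : k < n then x ⟨k, h⟩ else false

private lemma extBV_eq {n : ℕ} (x : Fin n → Bool) (k : ℕ) (h : k < n) :
    extBV x k = x ⟨k, h⟩ := dif_pos h

/-- Auxiliary: from shared-deletion facts (with `i ≤ i'`) build a common burst-insertion. -/
private lemma aux_del_ins {n b : ℕ} (hn : b ≤ n) (x y : Fin n → Bool) (i i' : ℕ)
    (hii : i ≤ i') (hi' : i' ≤ n - b)
    (f1 : ∀ k, k < i → extBV x k = extBV y k)
    (f2 : ∀ k, i ≤ k → k < i' → extBV x (k + b) = extBV y k)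
    (f3 : ∀ k, i' ≤ k → k < n - b → extBV x (k + b) = extBV y (k + b)) :
    (insBall b x ∩ insBall b y).Nonempty := by
  refine ⟨fun j => if (j : ℕ) < i' + b then extBV x (j : ℕ)
      else if (j : ℕ) < i' + 2 * b then extBV y ((j : ℕ) - b)
      else extBV x ((j : ℕ) - b), ?_, ?_⟩
  · refine ⟨i' + b, by omega, fun j => ?_⟩
    have hj := j.isLt
    by_cases h : (j : ℕ) < i' + b
    · simp only [h, if_true]
      rw [extBV_eq x (j : ℕ) hj]
    · have h2 : ¬ ((j : ℕ) + b < i' + b) := by omega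
      have h3 : ¬ ((j : ℕ) + b < i' + 2 * b) := by omega
      simp only [h, if_false, h2, h3]
      rw [show (j : ℕ) + b - b = (j : ℕ) by omega, extBV_eq x (j : ℕ) hj]
  · refine ⟨i, by omega, fun j => ?_⟩
    have hj := j.isLt
    by_cases h : (j : ℕ) < i
    · have h1 : (j : ℕ) < i' + b := by omega
      simp only [h, if_true, h1]
      rw [f1 (j : ℕ) h, extBV_eq y (j : ℕ) hj]
    · simp only [h, if_false]
      by_cases h1 : (j : ℕ) + b < i' + b
      · simp only [h1, if_true]
        rw [f2 (j : ℕ) (by omega) (by omega), extBV_eq y (j : ℕ) hj]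
      · by_cases h2 : (j : ℕ) + b < i' + 2 * b
        · simp only [h1, if_false, h2, if_true]
          rw [show (j : ℕ) + b - b = (j : ℕ) by omega, extBV_eq y (j : ℕ) hj]
        · simp only [h1, h2, if_false]
          rw [show (j : ℕ) + b - b = (j : ℕ) by omega]
          have := f3 ((j : ℕ) - b) (by omega) (by omega)
          rw [show (j : ℕ) - b + b = (j : ℕ) by omega] at this
          rw [this, extBV_eq y (j : ℕ) hj]

/-- Auxiliary: from a shared-insertion (with `i ≤ i'`) build a common burst-deletion. -/
private lemma aux_ins_del {n b : ℕ} (hb : 0 < b) (hn : b ≤ n) (x y : Fin n → Bool)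
    (v : Fin (n + b) → Bool) (i i' : ℕ)
    (hii : i ≤ i') (hi : i ≤ n) (hi' : i' ≤ n)
    (gx : ∀ k, (hk : k < n) → x ⟨k, hk⟩ =
      if k < i then extBV v k else extBV v (k + b))
    (gy : ∀ k, (hk : k < n) → y ⟨k, hk⟩ =
      if k < i' then extBV v k else extBV v (k + b)) :
    (delBall b x ∩ delBall b y).Nonempty := by
  by_cases hcase : i' < i + b
  · -- overlapping bursts: delete at `min i (n-b)` from both
    refine ⟨fun j => if (j : ℕ) < min i (n - b) then extBV x (j : ℕ)
        else extBV x ((j : ℕ) + b),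
      ⟨min i (n - b), by omega, fun j => ?_⟩, ⟨min i (n - b), by omega, fun j => ?_⟩⟩
    · have hj := j.isLt
      by_cases h : (j : ℕ) < min i (n - b)
      · simp only [h, if_true]; rw [extBV_eq x (j : ℕ) (by omega)]
      · simp only [h, if_false]; rw [extBV_eq x ((j : ℕ) + b) (by omega)]
    · have hj := j.isLt
      by_cases h : (j : ℕ) < min i (n - b)
      · simp only [h, if_true]
        rw [extBV_eq x (j : ℕ) (by omega)]
        have hx' := gx (j : ℕ) (by omega)
        have hy' := gy (j : ℕ) (by omega)
        rw [if_pos (show (j : ℕ) < i by omega)] at hx'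
        rw [if_pos (show (j : ℕ) < i' by omega)] at hy'
        rw [hx', ← hy']
      · simp only [h, if_false]
        rw [extBV_eq x ((j : ℕ) + b) (by omega)]
        have hx' := gx ((j : ℕ) + b) (by omega)
        have hy' := gy ((j : ℕ) + b) (by omega)
        rw [if_neg (show ¬ ((j : ℕ) + b < i) by omega)] at hx'
        rw [if_neg (show ¬ ((j : ℕ) + b < i') by omega)] at hy'
        rw [hx', ← hy']
  · -- disjoint bursts: i + b ≤ i'
    refine ⟨fun j => if (j : ℕ) < i then extBV v (j : ℕ)
        else if (j : ℕ) < i' - b then extBV v ((j : ℕ) + b) else extBV v ((j : ℕ) + 2 * b),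
      ⟨i' - b, by omega, fun j => ?_⟩, ⟨i, by omega, fun j => ?_⟩⟩
    · have hj := j.isLt
      by_cases h : (j : ℕ) < i' - b
      · simp only [h, if_true]
        by_cases h1 : (j : ℕ) < i
        · simp only [h1, if_true]
          have hx' := gx (j : ℕ) (by omega)
          rw [if_pos (show (j : ℕ) < i by omega)] at hx'
          exact hx'.symm
        · simp only [h1, if_false]
          have hx' := gx (j : ℕ) (by omega)
          rw [if_neg (show ¬ ((j : ℕ) < i) by omega)] at hx'
          exact hx'.symm
      · have h1 : ¬ ((j : ℕ) < i) := by omega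
        simp only [h, h1, if_false]
        have hx' := gx ((j : ℕ) + b) (by omega)
        rw [if_neg (show ¬ ((j : ℕ) + b < i) by omega)] at hx'
        rw [hx']
        congr 1
        omega
    · have hj := j.isLt
      by_cases h : (j : ℕ) < i
      · simp only [h, if_true]
        have hy' := gy (j : ℕ) (by omega)
        rw [if_pos (show (j : ℕ) < i' by omega)] at hy'
        exact hy'.symm
      · simp only [h, if_false]
        by_cases h1 : (j : ℕ) < i' - b
        · simp only [h1, if_true]
          have hy' := gy ((j : ℕ) + b) (by omega)
          rw [if_pos (show (j : ℕ) + b < i' by omega)] at hy'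
          exact hy'.symm
        · simp only [h1, if_false]
          have hy' := gy ((j : ℕ) + b) (by omega)
          rw [if_neg (show ¬ ((j : ℕ) + b < i') by omega)] at hy'
          rw [hy']
          congr 1
          omega

private lemma del_nonempty_to_ins {n b : ℕ} (hn : b ≤ n) (x y : Fin n → Bool)
    (h : (delBall b x ∩ delBall b y).Nonempty) :
    (insBall b x ∩ insBall b y).Nonempty := by
  obtain ⟨z, ⟨i, hi, hx⟩, ⟨i', hi', hy⟩⟩ := h
  -- translate to extBV facts
  have key : ∀ (x y : Fin n → Bool) (i i' : ℕ), i ≤ i' → i ≤ n - b → i' ≤ n - b →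
      (∀ j : Fin (n - b), z j = if (j : ℕ) < i
        then x ⟨(j : ℕ), by have := j.isLt; omega⟩
        else x ⟨(j : ℕ) + b, by have := j.isLt; omega⟩) →
      (∀ j : Fin (n - b), z j = if (j : ℕ) < i'
        then y ⟨(j : ℕ), by have := j.isLt; omega⟩
        else y ⟨(j : ℕ) + b, by have := j.isLt; omega⟩) →
      (insBall b x ∩ insBall b y).Nonempty := by
    intro x y i i' hii hi hi' hx hy
    refine aux_del_ins hn x y i i' hii hi' ?_ ?_ ?_
    · intro k hk
      have h1 := hx ⟨k, by omega⟩
      have h2 := hy ⟨k, by omega⟩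
      rw [if_pos (by simpa using hk)] at h1
      rw [if_pos (by simp; omega)] at h2
      rw [extBV_eq x k (by omega), extBV_eq y k (by omega)]
      rw [← h1, h2]
    · intro k hk hk'
      have h1 := hx ⟨k, by omega⟩
      have h2 := hy ⟨k, by omega⟩
      rw [if_neg (by simp; omega)] at h1
      rw [if_pos (by simpa using hk')] at h2
      rw [extBV_eq x (k + b) (by omega), extBV_eq y k (by omega)]
      rw [← h1, h2]
    · intro k hk hk'
      have h1 := hx ⟨k, by omega⟩
      have h2 := hy ⟨k, by omega⟩
      rw [if_neg (by simp; omega)] at h1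
      rw [if_neg (by simp; omega)] at h2
      rw [extBV_eq x (k + b) (by omega), extBV_eq y (k + b) (by omega)]
      rw [← h1, h2]
  rcases le_total i i' with hii | hii
  · exact key x y i i' hii hi hi' hx hy
  · rw [Set.inter_comm]
    exact key y x i' i hii hi' hi hy hx

private lemma ins_nonempty_to_del {n b : ℕ} (hb : 0 < b) (hn : b ≤ n) (x y : Fin n → Bool)
    (h : (insBall b x ∩ insBall b y).Nonempty) :
    (delBall b x ∩ delBall b y).Nonempty := by
  obtain ⟨v, ⟨i, hi, hx⟩, ⟨i', hi', hy⟩⟩ := h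
  have key : ∀ (x y : Fin n → Bool) (i i' : ℕ), i ≤ i' → i ≤ n → i' ≤ n →
      (∀ j : Fin n, x j = if (j : ℕ) < i
        then v ⟨(j : ℕ), by have := j.isLt; omega⟩
        else v ⟨(j : ℕ) + b, by have := j.isLt; omega⟩) →
      (∀ j : Fin n, y j = if (j : ℕ) < i'
        then v ⟨(j : ℕ), by have := j.isLt; omega⟩
        else v ⟨(j : ℕ) + b, by have := j.isLt; omega⟩) →
      (delBall b x ∩ delBall b y).Nonempty := by
    intro x y i i' hii hi hi' hx hy
    refine aux_ins_del hb hn x y v i i' hii hi hi' ?_ ?_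
    · intro k hk
      have h1 := hx ⟨k, hk⟩
      by_cases h : k < i
      · rw [if_pos (by simpa using h)] at h1
        rw [if_pos h, h1, extBV_eq v k (by omega)]
      · rw [if_neg (by simpa using h)] at h1
        rw [if_neg h, h1, extBV_eq v (k + b) (by omega)]
    · intro k hk
      have h1 := hy ⟨k, hk⟩
      by_cases h : k < i'
      · rw [if_pos (by simpa using h)] at h1
        rw [if_pos h, h1, extBV_eq v k (by omega)]
      · rw [if_neg (by simpa using h)] at h1
        rw [if_neg h, h1, extBV_eq v (k + b) (by omega)]
  rcases le_total i i' with hii | hii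
  · exact key x y i i' hii hi hi' hx hy
  · rw [Set.inter_comm]
    exact key y x i' i hii hi' hi hy hx

/-- `C ⊆ 𝔽₂ⁿ` is a `b`-burst-deletion-correcting code iff it is a
`b`-burst-insertion-correcting code. -/
theorem burst_deletion_iff_burst_insertion (n b : ℕ) (hb : 0 < b) (hn : b ≤ n)
    (C : Set (Fin n → Bool)) :
    (∀ x ∈ C, ∀ y ∈ C, x ≠ y → delBall b x ∩ delBall b y = ∅) ↔
    (∀ x ∈ C, ∀ y ∈ C, x ≠ y → insBall b x ∩ insBall b y = ∅) := by
  constructor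
  · intro h x hx y hy hxy
    rw [← Set.not_nonempty_iff_eq_empty]
    intro hne
    have := ins_nonempty_to_del hb hn x y hne
    rw [h x hx y hy hxy] at this
    exact Set.not_nonempty_empty this
  · intro h x hx y hy hxy
    rw [← Set.not_nonempty_iff_eq_empty]
    intro hne
    have := del_nonempty_to_ins hn x y hne
    rw [h x hx y hy hxy] at this
    exact Set.not_nonempty_empty this
end

section
/- A code C ⊆ 𝔽₂ⁿ can correct a deletion burst of size at most b if and only if it can correct an insertion burst of size at most b. -/
theorem del_to_ins_aux {n a : ℕ} (ha : a ≤ n) (x y : Fin n → Bool)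
    (z : Fin (n - a) → Bool) (i i' : ℕ) (hi' : i' ≤ n - a) (hii : i ≤ i')
    (hx : ∀ (j : ℕ) (hj : j < n - a),
      z ⟨j, hj⟩ = if j < i then x ⟨j, by omega⟩ else x ⟨j + a, by omega⟩)
    (hy : ∀ (j : ℕ) (hj : j < n - a),
      z ⟨j, hj⟩ = if j < i' then y ⟨j, by omega⟩ else y ⟨j + a, by omega⟩) :
    ∃ v : Fin (n + a) → Bool, v ∈ insBall a x ∧ v ∈ insBall a y := by
  classical
  have xcongr : ∀ (p q : ℕ) (hp : p < n) (hq : q < n), p = q → x ⟨p, hp⟩ = x ⟨q, hq⟩ := by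
    intro p q hp hq h; subst h; rfl
  have ycongr : ∀ (p q : ℕ) (hp : p < n) (hq : q < n), p = q → y ⟨p, hp⟩ = y ⟨q, hq⟩ := by
    intro p q hp hq h; subst h; rfl
  have hxy1 : ∀ (j : ℕ) (hj : j < n), j < i → x ⟨j, hj⟩ = y ⟨j, hj⟩ := by
    intro j hj h
    have hj' : j < n - a := by omega
    have h1 := hx j hj'; rw [if_pos h] at h1
    have h2 := hy j hj'; rw [if_pos (by omega)] at h2
    exact h1.symm.trans h2
  have hxy2 : ∀ (j : ℕ), i' + a ≤ j → ∀ (hj : j < n), x ⟨j, hj⟩ = y ⟨j, hj⟩ := by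
    intro j h hj
    have hj' : j - a < n - a := by omega
    have h1 := hx (j - a) hj'; rw [if_neg (by omega)] at h1
    have h2 := hy (j - a) hj'; rw [if_neg (by omega)] at h2
    calc x ⟨j, hj⟩ = x ⟨j - a + a, by omega⟩ := xcongr _ _ _ _ (by omega)
      _ = z ⟨j - a, hj'⟩ := h1.symm
      _ = y ⟨j - a + a, by omega⟩ := h2
      _ = y ⟨j, hj⟩ := ycongr _ _ _ _ (by omega)
  have hxy3 : ∀ (j : ℕ) (hj : j < n - a), i ≤ j → j < i' →
      x ⟨j + a, by omega⟩ = y ⟨j, by omega⟩ := by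
    intro j hj h1 h2
    have e1 := hx j hj; rw [if_neg (by omega)] at e1
    have e2 := hy j hj; rw [if_pos h2] at e2
    exact e1.symm.trans e2
  let v : Fin (n + a) → Bool := fun k =>
    if h : (k : ℕ) < i' + a then x ⟨(k : ℕ), by omega⟩
    else y ⟨(k : ℕ) - a, by have := k.isLt; omega⟩
  have hv1 : ∀ (k : ℕ) (hk : k < n + a) (h : k < i' + a), v ⟨k, hk⟩ = x ⟨k, by omega⟩ :=
    fun k hk h => dif_pos h
  have hv2 : ∀ (k : ℕ) (hk : k < n + a) (h : ¬ k < i' + a),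
      v ⟨k, hk⟩ = y ⟨k - a, by omega⟩ := fun k hk h => dif_neg h
  refine ⟨v, ⟨i' + a, by omega, fun j => ?_⟩, ⟨i, by omega, fun j => ?_⟩⟩
  · by_cases h : (j : ℕ) < i' + a
    · rw [if_pos h, hv1 _ _ h]
    · rw [if_neg h, hv2 _ _ (by omega)]
      exact (hxy2 (j : ℕ) (by omega) j.isLt).trans (ycongr _ _ _ _ (by omega))
  · by_cases h : (j : ℕ) < i
    · rw [if_pos h, hv1 _ _ (by omega)]
      exact (hxy1 _ j.isLt h).symm
    · rw [if_neg h]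
      by_cases h2 : (j : ℕ) + a < i' + a
      · rw [hv1 _ _ h2]
        exact (hxy3 (j : ℕ) (by omega) (by omega) (by omega)).symm
      · rw [hv2 _ _ h2]
        exact ycongr _ _ _ _ (by omega)

theorem ins_to_del_aux {n a : ℕ} (ha1 : 1 ≤ a) (ha : a ≤ n) (x y : Fin n → Bool) (hxy : x ≠ y)
    (v : Fin (n + a) → Bool) (i i' : ℕ) (hi : i ≤ n) (hi' : i' ≤ n) (hii : i ≤ i')
    (hx : ∀ (j : ℕ) (hj : j < n),
      x ⟨j, hj⟩ = if j < i then v ⟨j, by omega⟩ else v ⟨j + a, by omega⟩)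
    (hy : ∀ (j : ℕ) (hj : j < n),
      y ⟨j, hj⟩ = if j < i' then v ⟨j, by omega⟩ else v ⟨j + a, by omega⟩) :
    ∃ a', 1 ≤ a' ∧ a' ≤ a ∧
      ∃ z : Fin (n - a') → Bool, z ∈ delBall a' x ∧ z ∈ delBall a' y := by
  classical
  have hlt : i < i' := by
    rcases Nat.lt_or_ge i i' with h | h
    · exact h
    · exfalso; apply hxy; funext j
      have hieq : i = i' := by omega
      subst hieq
      exact (hx (j : ℕ) j.isLt).trans (hy (j : ℕ) j.isLt).symm
  have agreeLow : ∀ (k : ℕ) (hk : k < n), k < i → x ⟨k, hk⟩ = y ⟨k, hk⟩ := by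
    intro k hk h
    have e1 := hx k hk; rw [if_pos h] at e1
    have e2 := hy k hk; rw [if_pos (by omega)] at e2
    exact e1.trans e2.symm
  have agreeHigh : ∀ (k : ℕ) (hk : k < n), i' ≤ k → x ⟨k, hk⟩ = y ⟨k, hk⟩ := by
    intro k hk h
    have e1 := hx k hk; rw [if_neg (by omega)] at e1
    have e2 := hy k hk; rw [if_neg (by omega)] at e2
    exact e1.trans e2.symm
  rcases Nat.lt_or_ge i' (i + a) with hover | hdisj
  · -- overlapping bursts: delete a burst of size i' - i
    refine ⟨i' - i, by omega, by omega, ?_⟩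
    let z : Fin (n - (i' - i)) → Bool := fun j =>
      if h : (j : ℕ) < i then x ⟨(j : ℕ), by have := j.isLt; omega⟩
      else x ⟨(j : ℕ) + (i' - i), by have := j.isLt; omega⟩
    have hz1 : ∀ (k : ℕ) (hk : k < n - (i' - i)) (h : k < i),
        z ⟨k, hk⟩ = x ⟨k, by omega⟩ := fun k hk h => dif_pos h
    have hz2 : ∀ (k : ℕ) (hk : k < n - (i' - i)) (h : ¬ k < i),
        z ⟨k, hk⟩ = x ⟨k + (i' - i), by omega⟩ := fun k hk h => dif_neg h
    refine ⟨z, ⟨i, by omega, fun j => ?_⟩, ⟨i, by omega, fun j => ?_⟩⟩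
    · by_cases h : (j : ℕ) < i
      · rw [if_pos h]; exact hz1 _ j.isLt h
      · rw [if_neg h]; exact hz2 _ j.isLt h
    · by_cases h : (j : ℕ) < i
      · rw [if_pos h]
        exact (hz1 _ j.isLt h).trans (agreeLow _ (by have := j.isLt; omega) h)
      · rw [if_neg h]
        exact (hz2 _ j.isLt h).trans (agreeHigh _ (by have := j.isLt; omega) (by omega))
  · -- disjoint bursts: delete both bursts from v
    refine ⟨a, ha1, le_refl a, ?_⟩
    let z : Fin (n - a) → Bool := fun j =>
      if (j : ℕ) < i then v ⟨(j : ℕ), by have := j.isLt; omega⟩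
      else if (j : ℕ) < i' - a then v ⟨(j : ℕ) + a, by have := j.isLt; omega⟩
      else v ⟨(j : ℕ) + a + a, by have := j.isLt; omega⟩
    have hzv1 : ∀ (k : ℕ) (hk : k < n - a) (h : k < i),
        z ⟨k, hk⟩ = v ⟨k, by omega⟩ := fun k hk h => if_pos h
    have hzv2 : ∀ (k : ℕ) (hk : k < n - a) (h1 : ¬ k < i) (h2 : k < i' - a),
        z ⟨k, hk⟩ = v ⟨k + a, by omega⟩ := fun k hk h1 h2 => (if_neg h1).trans (if_pos h2)
    have hzv3 : ∀ (k : ℕ) (hk : k < n - a) (h1 : ¬ k < i) (h2 : ¬ k < i' - a),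
        z ⟨k, hk⟩ = v ⟨k + a + a, by omega⟩ := fun k hk h1 h2 => (if_neg h1).trans (if_neg h2)
    refine ⟨z, ⟨i' - a, by omega, fun j => ?_⟩, ⟨i, by omega, fun j => ?_⟩⟩
    · by_cases h1 : (j : ℕ) < i
      · rw [if_pos (show (j : ℕ) < i' - a by omega)]
        have e := hx (j : ℕ) (by have := j.isLt; omega); rw [if_pos h1] at e
        exact (hzv1 _ j.isLt h1).trans e.symm
      · by_cases h2 : (j : ℕ) < i' - a
        · rw [if_pos h2]
          have e := hx (j : ℕ) (by have := j.isLt; omega); rw [if_neg h1] at e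
          exact (hzv2 _ j.isLt h1 h2).trans e.symm
        · rw [if_neg h2]
          have e := hx ((j : ℕ) + a) (by have := j.isLt; omega)
          rw [if_neg (by omega)] at e
          exact (hzv3 _ j.isLt h1 h2).trans e.symm
    · by_cases h1 : (j : ℕ) < i
      · rw [if_pos h1]
        have e := hy (j : ℕ) (by have := j.isLt; omega); rw [if_pos (by omega)] at e
        exact (hzv1 _ j.isLt h1).trans e.symm
      · rw [if_neg h1]
        by_cases h2 : (j : ℕ) < i' - a
        · have e := hy ((j : ℕ) + a) (by have := j.isLt; omega)
          rw [if_pos (by omega)] at e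
          exact (hzv2 _ j.isLt h1 h2).trans e.symm
        · have e := hy ((j : ℕ) + a) (by have := j.isLt; omega)
          rw [if_neg (by omega)] at e
          exact (hzv3 _ j.isLt h1 h2).trans e.symm

/-- `C ⊆ 𝔽₂ⁿ` can correct a deletion burst of size at most `b` iff it can
correct an insertion burst of size at most `b`. -/
theorem burst_at_most_deletion_iff_insertion (n b : ℕ) (hb : 0 < b) (hn : b ≤ n)
    (C : Set (Fin n → Bool)) :
    (∀ x ∈ C, ∀ y ∈ C, x ≠ y → ∀ a, 1 ≤ a → a ≤ b → delBall a x ∩ delBall a y = ∅) ↔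
    (∀ x ∈ C, ∀ y ∈ C, x ≠ y → ∀ a, 1 ≤ a → a ≤ b → insBall a x ∩ insBall a y = ∅) := by
  
  constructor
  · intro H x hxC y hyC hxy a ha1 hab
    rw [Set.eq_empty_iff_forall_notMem]
    rintro v ⟨⟨i, hi, hxv⟩, ⟨i', hi', hyv⟩⟩
    have hx' : ∀ (j : ℕ) (hj : j < n),
        x ⟨j, hj⟩ = if j < i then v ⟨j, by omega⟩ else v ⟨j + a, by omega⟩ :=
      fun j hj => hxv ⟨j, hj⟩
    have hy' : ∀ (j : ℕ) (hj : j < n),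
        y ⟨j, hj⟩ = if j < i' then v ⟨j, by omega⟩ else v ⟨j + a, by omega⟩ :=
      fun j hj => hyv ⟨j, hj⟩
    rcases le_total i i' with h | h
    · obtain ⟨a', h1, h2, z, hz1, hz2⟩ :=
        ins_to_del_aux ha1 (by omega) x y hxy v i i' hi hi' h hx' hy'
      have hH := H x hxC y hyC hxy a' h1 (by omega)
      rw [Set.eq_empty_iff_forall_notMem] at hH
      exact hH z ⟨hz1, hz2⟩
    · obtain ⟨a', h1, h2, z, hz1, hz2⟩ :=
        ins_to_del_aux ha1 (by omega) y x (Ne.symm hxy) v i' i hi' hi h hy' hx'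
      have hH := H x hxC y hyC hxy a' h1 (by omega)
      rw [Set.eq_empty_iff_forall_notMem] at hH
      exact hH z ⟨hz2, hz1⟩
  · intro H x hxC y hyC hxy a ha1 hab
    rw [Set.eq_empty_iff_forall_notMem]
    rintro z ⟨⟨i, hi, hxz⟩, ⟨i', hi', hyz⟩⟩
    have hx' : ∀ (j : ℕ) (hj : j < n - a),
        z ⟨j, hj⟩ = if j < i then x ⟨j, by omega⟩ else x ⟨j + a, by omega⟩ :=
      fun j hj => hxz ⟨j, hj⟩
    have hy' : ∀ (j : ℕ) (hj : j < n - a),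
        z ⟨j, hj⟩ = if j < i' then y ⟨j, by omega⟩ else y ⟨j + a, by omega⟩ :=
      fun j hj => hyz ⟨j, hj⟩
    have hH := H x hxC y hyC hxy a ha1 hab
    rw [Set.eq_empty_iff_forall_notMem] at hH
    rcases le_total i i' with h | h
    · obtain ⟨v, hv1, hv2⟩ := del_to_ins_aux (by omega) x y z i i' hi' h hx' hy'
      exact hH v ⟨hv1, hv2⟩
    · obtain ⟨v, hv1, hv2⟩ := del_to_ins_aux (by omega) y x z i' i hi h hy' hx'
      exact hH v ⟨hv2, hv1⟩
end

section
/- For every positive integer b dividing n and every x ∈ 𝔽₂ⁿ, the size of the b-burst-deletion ball of x equals |D_b(x)| = 1 + Σ_{i=1}^{b} (r(A_b(x)_i) − 1), where r(A_b(x)_i) is the number of runs of the i-th row of the array A_b(x). -/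
namespace BurstAux

/-- Result of deleting `b` consecutive coordinates starting at position `i`. -/
def delAt (b : ℕ) {n : ℕ} (x : Fin n → Bool) (i : ℕ) : Fin (n - b) → Bool :=
  fun j => if (j : ℕ) < i
    then x ⟨(j : ℕ), by have := j.isLt; omega⟩
    else x ⟨(j : ℕ) + b, by have := j.isLt; omega⟩

/-- Totalization of a vector. -/
def Xf {n : ℕ} (x : Fin n → Bool) (k : ℕ) : Bool :=
  if h : k < n then x ⟨k, h⟩ else false

lemma Xf_eq {n : ℕ} (x : Fin n → Bool) (k : ℕ) (h : k < n) : Xf x k = x ⟨k, h⟩ := dif_pos h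

variable {n : ℕ} (b : ℕ) (x : Fin n → Bool)

lemma delBall_eq_image :
    delBall b x = ↑((Finset.range (n - b + 1)).image (delAt b x)) := by
  ext y
  simp only [delBall, Set.mem_setOf_eq, Finset.coe_image, Set.mem_image, Finset.mem_coe,
    Finset.mem_range]
  constructor
  · rintro ⟨i, hi, hy⟩
    exact ⟨i, by omega, by funext j; exact (hy j).symm⟩
  · rintro ⟨i, hi, hy⟩
    exact ⟨i, by omega, fun j => by rw [← hy]; rfl⟩

lemma delAt_ne (i i' k : ℕ) (hik : i ≤ k) (hk : k < i') (hkn : k < n - b)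
    (hm : Xf x k ≠ Xf x (k + b)) : delAt b x i ≠ delAt b x i' := by
  intro h
  apply hm
  have e1 : delAt b x i ⟨k, hkn⟩ = x ⟨k + b, by omega⟩ := by
    simp only [delAt]
    exact if_neg (show ¬ k < i by omega)
  have e2 : delAt b x i' ⟨k, hkn⟩ = x ⟨k, by omega⟩ := by
    simp only [delAt]
    exact if_pos (show k < i' by omega)
  have h1 := congrFun h ⟨k, hkn⟩
  rw [e1, e2] at h1
  rw [Xf_eq x k (by omega), Xf_eq x (k + b) (by omega)]
  exact h1.symm

lemma delAt_eq (i i' : ℕ) (hii : i ≤ i')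
    (h : ∀ k, i ≤ k → k < i' → Xf x k = Xf x (k + b)) :
    delAt b x i = delAt b x i' := by
  funext j
  have hj := j.isLt
  simp only [delAt]
  by_cases h1 : (j : ℕ) < i
  · rw [if_pos h1, if_pos (by omega)]
  · by_cases h2 : (j : ℕ) < i'
    · rw [if_neg h1, if_pos h2]
      have hx := h j (by omega) h2
      rw [Xf_eq x j (by omega), Xf_eq x (j + b) (by omega)] at hx
      exact hx.symm
    · rw [if_neg h1, if_neg h2]

/-- Canonical representatives: minimal deletion positions in each class. -/
noncomputable def Sset : Finset ℕ :=
  (Finset.range (n - b + 1)).filter (fun i => i = 0 ∨ Xf x (i - 1) ≠ Xf x (i - 1 + b))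

/-- Marked positions. -/
noncomputable def Tset : Finset ℕ :=
  (Finset.range (n - b)).filter (fun k => Xf x k ≠ Xf x (k + b))

lemma exists_rep : ∀ i, i ≤ n - b → ∃ s ∈ Sset b x, delAt b x s = delAt b x i := by
  intro i
  induction i using Nat.strong_induction_on with
  | _ i ih =>
    intro hi
    by_cases h0 : i = 0 ∨ Xf x (i - 1) ≠ Xf x (i - 1 + b)
    · exact ⟨i, Finset.mem_filter.mpr ⟨Finset.mem_range.mpr (by omega), h0⟩, rfl⟩
    · push_neg at h0
      obtain ⟨h1, h2⟩ := h0
      obtain ⟨s, hs, he⟩ := ih (i - 1) (by omega) (by omega)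
      refine ⟨s, hs, he.trans ?_⟩
      refine delAt_eq b x (i - 1) i (by omega) ?_
      intro k hk1 hk2
      have : k = i - 1 := by omega
      subst this
      exact h2

lemma injOn_S : Set.InjOn (delAt b x) (Sset b x) := by
  intro s hs s' hs' he
  simp only [Sset, Finset.coe_filter, Finset.mem_range, Set.mem_setOf_eq] at hs hs'
  by_contra hne
  rcases Nat.lt_or_ge s s' with h | h
  · have hs'0 : s' ≠ 0 := by omega
    have hmark : Xf x (s' - 1) ≠ Xf x (s' - 1 + b) := hs'.2.resolve_left hs'0
    exact delAt_ne b x s s' (s' - 1) (by omega) (by omega) (by omega) hmark he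
  · have hlt : s' < s := by omega
    have hs0 : s ≠ 0 := by omega
    have hmark : Xf x (s - 1) ≠ Xf x (s - 1 + b) := hs.2.resolve_left hs0
    exact delAt_ne b x s' s (s - 1) (by omega) (by omega) (by omega) hmark he.symm

lemma image_eq : (Finset.range (n - b + 1)).image (delAt b x) = (Sset b x).image (delAt b x) := by
  apply Finset.Subset.antisymm
  · intro y hy
    simp only [Finset.mem_image, Finset.mem_range] at hy ⊢
    obtain ⟨i, hi, rfl⟩ := hy
    obtain ⟨s, hs, he⟩ := exists_rep b x i (by omega)
    exact ⟨s, hs, he⟩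
  · apply Finset.image_subset_image
    intro s hs
    simp only [Sset, Finset.mem_filter] at hs
    exact hs.1

lemma Sset_card : (Sset b x).card = 1 + (Tset b x).card := by
  have hSeq : Sset b x = insert 0 ((Tset b x).image (· + 1)) := by
    ext i
    simp only [Sset, Tset, Finset.mem_insert, Finset.mem_image, Finset.mem_filter,
      Finset.mem_range]
    constructor
    · rintro ⟨hi, h⟩
      by_cases h0 : i = 0
      · exact Or.inl h0
      · refine Or.inr ⟨i - 1, ⟨by omega, h.resolve_left h0⟩, by omega⟩
    · rintro (rfl | ⟨k, ⟨hk, hm⟩, rfl⟩)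
      · exact ⟨by omega, Or.inl rfl⟩
      · refine ⟨by omega, Or.inr ?_⟩
        simpa using hm
  rw [hSeq, Finset.card_insert_of_notMem (by simp),
    Finset.card_image_of_injective _ (fun a b h => by omega)]
  omega

lemma sum_range_mul (f : ℕ → ℕ) (c M : ℕ) :
    ∑ k ∈ Finset.range (M * c), f k = ∑ j ∈ Finset.range M, ∑ r ∈ Finset.range c, f (j * c + r) := by
  induction M with
  | zero => simp
  | succ M ih =>
    rw [Nat.succ_mul, Finset.sum_range_add, ih, Finset.sum_range_succ]

lemma numRuns_eq {m : ℕ} (hm : 0 < m) (z : Fin m → Bool) :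
    numRuns z = 1 + ((Finset.range (m - 1)).filter (fun j => Xf z (j + 1) ≠ Xf z j)).card := by
  classical
  unfold numRuns
  rw [Finset.card_filter, Finset.card_filter]
  have h1 : ∀ i : Fin m,
      (if ((i : ℕ) = 0 ∨ z i ≠ z ⟨(i : ℕ) - 1, by have := i.isLt; omega⟩) then (1 : ℕ) else 0)
      = (fun k => if (k = 0 ∨ Xf z k ≠ Xf z (k - 1)) then (1 : ℕ) else 0) (i : ℕ) := by
    intro i
    have hi := i.isLt
    simp only [Xf_eq z (i : ℕ) hi, Xf_eq z ((i : ℕ) - 1) (by omega), Fin.eta]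
  rw [Finset.sum_congr rfl (fun i _ => h1 i),
    Fin.sum_univ_eq_sum_range (fun k => if (k = 0 ∨ Xf z k ≠ Xf z (k - 1)) then (1 : ℕ) else 0) m]
  obtain ⟨M, rfl⟩ : ∃ M, m = M + 1 := ⟨m - 1, by omega⟩
  rw [Finset.sum_range_succ']
  simp only [Nat.add_sub_cancel, Nat.succ_ne_zero, false_or, eq_self_iff_true, true_or, if_true]
  omega

lemma Tcard (hb : 0 < b) (hn : 0 < n) (hdvd : b ∣ n) :
    (Tset b x).card = ∑ r : Fin b, (numRuns (arrRow b x r) - 1) := by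
  classical
  have hnm : b * (n / b) = n := Nat.mul_div_cancel' hdvd
  set m := n / b with hm_def
  have hm : 0 < m := by
    rcases Nat.eq_zero_or_pos m with h | h
    · rw [h, Nat.mul_zero] at hnm; omega
    · exact h
  have hmb : m * b = n := by rw [mul_comm]; exact hnm
  have hNb : n - b = (m - 1) * b := by
    have e1 : (m - 1) * b = m * b - 1 * b := Nat.sub_mul m 1 b
    omega
  have key : ∀ (R : Fin b) (j : ℕ), j < m → Xf (arrRow b x R) j = Xf x (j * b + (R : ℕ)) := by
    intro R j hj
    have hb1 : j * b + (R : ℕ) < n := by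
      have h2 : (j + 1) * b ≤ m * b := Nat.mul_le_mul_right b (by omega)
      have h3 := Nat.add_mul j 1 b
      have hR := R.isLt
      omega
    rw [Xf_eq (arrRow b x R) j hj, Xf_eq x (j * b + (R : ℕ)) hb1]
    rfl
  have hterm : ∀ (R : Fin b) (j : ℕ), j < m - 1 →
      (if Xf x (j * b + (R : ℕ)) ≠ Xf x (j * b + (R : ℕ) + b) then (1 : ℕ) else 0)
      = (if Xf (arrRow b x R) (j + 1) ≠ Xf (arrRow b x R) j then (1 : ℕ) else 0) := by
    intro R j hj
    rw [key R j (by omega), key R (j + 1) (by omega)]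
    have : (j + 1) * b + (R : ℕ) = j * b + (R : ℕ) + b := by
      have := Nat.add_mul j 1 b; omega
    rw [this]
    by_cases h : Xf x (j * b + (R : ℕ) + b) ≠ Xf x (j * b + (R : ℕ))
    · rw [if_pos (fun hc => h hc.symm), if_pos h]
    · rw [if_neg (fun hc => h fun he => hc he.symm), if_neg h]
  calc (Tset b x).card
      = ∑ k ∈ Finset.range (n - b), (if Xf x k ≠ Xf x (k + b) then 1 else 0) := by
        rw [Tset, Finset.card_filter]
    _ = ∑ j ∈ Finset.range (m - 1), ∑ r ∈ Finset.range b,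
          (if Xf x (j * b + r) ≠ Xf x (j * b + r + b) then 1 else 0) := by
        rw [hNb, sum_range_mul]
    _ = ∑ j ∈ Finset.range (m - 1), ∑ r : Fin b,
          (if Xf x (j * b + (r : ℕ)) ≠ Xf x (j * b + (r : ℕ) + b) then 1 else 0) := by
        refine Finset.sum_congr rfl fun j _ => ?_
        exact (Fin.sum_univ_eq_sum_range
          (fun r => if Xf x (j * b + r) ≠ Xf x (j * b + r + b) then 1 else 0) b).symm
    _ = ∑ j ∈ Finset.range (m - 1), ∑ r : Fin b,
          (if Xf (arrRow b x r) (j + 1) ≠ Xf (arrRow b x r) j then (1 : ℕ) else 0) := by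
        refine Finset.sum_congr rfl fun j hj => Finset.sum_congr rfl fun r _ => ?_
        exact hterm r j (Finset.mem_range.mp hj)
    _ = ∑ r : Fin b, ∑ j ∈ Finset.range (m - 1),
          (if Xf (arrRow b x r) (j + 1) ≠ Xf (arrRow b x r) j then (1 : ℕ) else 0) :=
        Finset.sum_comm
    _ = ∑ r : Fin b, (numRuns (arrRow b x r) - 1) := by
        refine Finset.sum_congr rfl fun r _ => ?_
        rw [← Finset.card_filter]
        have := numRuns_eq hm (arrRow b x r)
        omega

end BurstAux

/-- for `b ∣ n`, `|D_b(x)| = 1 + Σ_{i=1}^{b} (r(A_b(x)_i) − 1)`. -/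
theorem delBall_ncard_eq_one_add_sum_runs (n b : ℕ) (hb : 0 < b) (hn : 0 < n)
    (hdvd : b ∣ n) (x : Fin n → Bool) :
    (delBall b x).ncard = 1 + ∑ r : Fin b, (numRuns (arrRow b x r) - 1) := by
  classical
  rw [BurstAux.delBall_eq_image b x, Set.ncard_coe_finset, BurstAux.image_eq b x,
    Finset.card_image_of_injOn (BurstAux.injOn_S b x), BurstAux.Sset_card b x,
    BurstAux.Tcard b x hb hn hdvd]
end

section
/- Let b divide n, let x ∈ 𝔽₂ⁿ and y ∈ 𝔽₂^{n+b}. If x ∈ D_b(y), then |D_b(y)| ≥ |D_b(x)|. -/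
/-!
Deleting the burst at position `i + 1` instead of `i` changes the result exactly when
`u i ≠ u (i + b)`, so `|D_b(u)|` is one more than the number of `b`-shift breaks of `u`,
the positions `t` with `u t ≠ u (t + b)`. If `x` arises from `y` by deleting the burst at
`k`, each break `t` of `x` is a break of `y` at `t` or at `t + b`: at `t` if `t + b < k`,
at `t + b` if `k ≤ t`, and when the burst lies between `t` and `t + b`, the inequality
`y t ≠ y (t + 2b)` forces a break of `y` at `t` or at `t + b`. Sending `t` to `t` only when
`t < k` and to `t + b` only when `k ≤ t + b` makes this choice injective.
-/

namespace BurstDeletion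

open Finset

def burstDel (b : ℕ) {m : ℕ} (u : Fin m → Bool) (i : ℕ) : Fin (m - b) → Bool :=
  fun j => if (j : ℕ) < i then u ⟨j, by omega⟩ else u ⟨j + b, by omega⟩

def extendByFalse {m : ℕ} (u : Fin m → Bool) (t : ℕ) : Bool :=
  if h : t < m then u ⟨t, h⟩ else false

def shiftBreaks {α : Type*} [DecidableEq α] (b N : ℕ) (X : ℕ → α) : Finset ℕ :=
  (range N).filter fun t => X t ≠ X (t + b)

lemma shiftBreaks_succ {α : Type*} [DecidableEq α] (b N : ℕ) (X : ℕ → α) :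
    shiftBreaks b (N + 1) X =
      if X N ≠ X (N + b) then insert N (shiftBreaks b N X) else shiftBreaks b N X := by
  rw [shiftBreaks, range_add_one, filter_insert, shiftBreaks]

lemma delBall_eq_image_burstDel (b : ℕ) {m : ℕ} (u : Fin m → Bool) :
    delBall b u = (range (m - b + 1)).image (burstDel b u) := by
  ext z
  simp only [delBall, Set.mem_ofPred_eq, coe_image, Set.mem_image, mem_coe, mem_range,
    Nat.lt_succ_iff, funext_iff, burstDel, eq_comm (a := z _)]

lemma burstDel_succ_mem_image_iff (b : ℕ) {m : ℕ} (u : Fin m → Bool) {N : ℕ}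
    (hN : N < m - b) :
    burstDel b u (N + 1) ∈ (range (N + 1)).image (burstDel b u) ↔
      extendByFalse u N = extendByFalse u (N + b) := by
  simp only [extendByFalse, dif_pos (show N < m by omega), dif_pos (show N + b < m by omega)]
  constructor
  · intro hmem
    obtain ⟨i, hi, heq⟩ := mem_image.mp hmem
    have hi : i ≤ N := Nat.lt_succ_iff.mp (mem_range.mp hi)
    have := congrFun heq ⟨N, hN⟩
    simp only [burstDel, if_false, Nat.lt_succ_self, if_true,
      show ¬ N < i by omega] at this
    exact this.symm
  · intro hbreak
    refine mem_image.mpr ⟨N, self_mem_range_succ N, funext fun j => ?_⟩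
    simp only [burstDel]
    rcases lt_trichotomy (j : ℕ) N with hj | hj | hj
    · rw [if_pos hj, if_pos (by omega)]
    · rw [if_neg (by omega), if_pos (by omega)]
      simp only [hj, hbreak]
    · rw [if_neg (by omega), if_neg (by omega)]

lemma card_image_burstDel_range (b : ℕ) {m : ℕ} (u : Fin m → Bool) :
    ∀ N ≤ m - b, #((range (N + 1)).image (burstDel b u)) =
      1 + #(shiftBreaks b N (extendByFalse u))
  | 0, _ => by simp [shiftBreaks]
  | N + 1, hN => by
    have ih := card_image_burstDel_range b u N (by omega)
    have hmem_iff := burstDel_succ_mem_image_iff b u (N := N) (by omega)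
    rw [range_add_one, image_insert, shiftBreaks_succ]
    by_cases hbreak : extendByFalse u N = extendByFalse u (N + b)
    · rw [card_insert_of_mem (hmem_iff.mpr hbreak), if_neg (not_not.mpr hbreak), ih]
    · have hN_new : N ∉ shiftBreaks b N (extendByFalse u) := by simp [shiftBreaks]
      rw [card_insert_of_notMem (mt hmem_iff.mp hbreak), if_pos hbreak,
        card_insert_of_notMem hN_new, ih, add_assoc]

theorem ncard_delBall (b : ℕ) {m : ℕ} (u : Fin m → Bool) :
    (delBall b u).ncard = 1 + #(shiftBreaks b (m - b) (extendByFalse u)) := by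
  rw [delBall_eq_image_burstDel, Set.ncard_coe_finset, card_image_burstDel_range b u _ le_rfl]

lemma card_shiftBreaks_le_of_burstDel {α : Type*} [DecidableEq α] {b n k : ℕ}
    {X Y : ℕ → α} (hX : ∀ t < n, X t = Y (if t < k then t else t + b)) :
    #(shiftBreaks b (n - b) X) ≤ #(shiftBreaks b n Y) := by
  let f : ℕ → ℕ := fun t =>
    if t + b < k then t else if k ≤ t then t + b else if Y t ≠ Y (t + b) then t else t + b
  have hf : ∀ t, (f t = t ∧ t < k) ∨ (f t = t + b ∧ k ≤ t + b) := by
    intro t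
    simp only [f]
    split_ifs <;> omega
  refine card_le_card_of_injOn f (fun t ht => ?_) (fun t _ t' _ heq => ?_)
  · simp only [shiftBreaks, coe_filter, mem_range, Set.mem_ofPred_eq] at ht ⊢
    obtain ⟨htn, hbreak⟩ := ht
    rw [hX t (by omega), hX (t + b) (by omega)] at hbreak
    simp only [f]
    by_cases h₁ : t + b < k
    · rw [if_pos (by omega), if_pos h₁] at hbreak
      rw [if_pos h₁]
      exact ⟨by omega, hbreak⟩
    rw [if_neg h₁] at hbreak ⊢
    by_cases h₂ : k ≤ t
    · rw [if_neg (by omega)] at hbreak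
      rw [if_pos h₂]
      exact ⟨by omega, hbreak⟩
    rw [if_pos (by omega)] at hbreak
    rw [if_neg h₂]
    split_ifs with h₃
    · exact ⟨by omega, h₃⟩
    · exact ⟨by omega, fun h => hbreak ((not_not.mp h₃).trans h)⟩
  · rcases hf t with ⟨e, l⟩ | ⟨e, l⟩ <;> rcases hf t' with ⟨e', l'⟩ | ⟨e', l'⟩ <;>
      rw [e, e'] at heq <;> omega

lemma extendByFalse_of_mem_insBall {b n : ℕ} {x : Fin n → Bool} {y : Fin (n + b) → Bool}
    (h : y ∈ insBall b x) : ∃ k, ∀ t < n,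
      extendByFalse x t = extendByFalse y (if t < k then t else t + b) := by
  obtain ⟨k, -, hxy⟩ := h
  refine ⟨k, fun t ht => ?_⟩
  have := hxy ⟨t, ht⟩
  split_ifs at this ⊢ with htk <;>
    simp_all [extendByFalse, show t < n + b by omega, show t + b < n + b by omega]

end BurstDeletion

open BurstDeletion in
theorem delBall_ncard_le_of_mem_delBall_general (n b : ℕ)
    (x : Fin n → Bool) (y : Fin (n + b) → Bool) (h : y ∈ insBall b x) :
    (delBall b x).ncard ≤ (delBall b y).ncard := by
  obtain ⟨k, hk⟩ := extendByFalse_of_mem_insBall h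
  rw [ncard_delBall, ncard_delBall, Nat.add_sub_cancel]
  exact Nat.add_le_add_left (card_shiftBreaks_le_of_burstDel hk) 1

/-- if `x ∈ D_b(y)` (equivalently `y ∈ I_b(x)`), then `|D_b(y)| ≥ |D_b(x)|`. -/
theorem delBall_ncard_le_of_mem_delBall (n b : ℕ) (hb : 0 < b) (hdvd : b ∣ n)
    (x : Fin n → Bool) (y : Fin (n + b) → Bool) (h : y ∈ insBall b x) :
    (delBall b x).ncard ≤ (delBall b y).ncard :=
  delBall_ncard_le_of_mem_delBall_general n b x y h
end

section
/- Let b divide n with n ≥ 2b. Then any b-burst-deletion-correcting code C ⊆ 𝔽₂ⁿ satisfies |C| ≤ (2^{n−b+1} − 2^b)/(n − 2b + 1). -/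
/-!
For `x ∈ 𝔽₂ⁿ` let `d(x)` count the positions `k` with `x_k ≠ x_{k+b}`. Starting the deleted burst
at `0` or right after each such position gives `d(x) + 1` distinct words of `D_b(x)`, and deleting a
burst never increases `d`. So the weights `1 / (d(y) + 1)` sum to at least `1` over every ball, and
as the balls of a code are disjoint, `|C| ≤ ∑_{y ∈ 𝔽₂^{n-b}} 1 / (d(y) + 1)`. A word is determined
by its first `b` letters and the set of positions counted by `d`, so this sum equals
`2^b ∑_j C(n-2b, j) / (j + 1) = 2^b (2^{n-2b+1} - 1) / (n - 2b + 1)`.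
-/

open Finset

namespace BurstDeletion

lemma ncard_le_sum_of_pairwiseDisjoint {α β : Type*} [Fintype β] {C : Set α} (hC : C.Finite)
    {B : α → Set β} (hB : C.PairwiseDisjoint B) {w : β → ℝ} (hw : ∀ y, 0 ≤ w y)
    (hF : ∀ x ∈ C, ∃ F : Finset β, ↑F ⊆ B x ∧ 1 ≤ ∑ y ∈ F, w y) :
    (C.ncard : ℝ) ≤ ∑ y, w y := by
  classical
  choose! F hFB hF using hF
  have hdisj : (hC.toFinset : Set α).PairwiseDisjoint F := fun x hx y hy hxy => by
    rw [Set.Finite.coe_toFinset] at hx hy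
    exact disjoint_coe.mp ((hB hx hy hxy).mono (hFB x hx) (hFB y hy))
  calc (C.ncard : ℝ) = ∑ _x ∈ hC.toFinset, (1 : ℝ) := by
        rw [Set.ncard_eq_toFinset_card C hC, sum_const, nsmul_one]
    _ ≤ ∑ x ∈ hC.toFinset, ∑ y ∈ F x, w y :=
        sum_le_sum fun x hx => hF x (hC.mem_toFinset.mp hx)
    _ = ∑ y ∈ hC.toFinset.biUnion F, w y := (sum_biUnion hdisj).symm
    _ ≤ ∑ y, w y := sum_le_univ_sum_of_nonneg hw

lemma sum_powerset_inv_card_add_one {α : Type*} (s : Finset α) :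
    ∑ t ∈ s.powerset, ((#t : ℝ) + 1)⁻¹ = (2 ^ (#s + 1) - 1) / (#s + 1) := by
  have hterm : ∀ j, (#s).choose j • ((j : ℝ) + 1)⁻¹ =
      ((#s + 1).choose (j + 1) : ℝ) / (#s + 1) := by
    intro j
    rw [nsmul_eq_mul, eq_div_iff (by positivity), ← div_eq_mul_inv, div_mul_eq_mul_div,
      div_eq_iff (by positivity)]
    exact_mod_cast (mul_comm _ _).trans (Nat.add_one_mul_choose_eq (#s) j)
  have hsum : ∑ j ∈ range (#s + 1), ((#s + 1).choose (j + 1) : ℝ) = 2 ^ (#s + 1) - 1 := by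
    have := Nat.sum_range_choose (#s + 1)
    rw [sum_range_succ', Nat.choose_zero_right] at this
    rw [eq_sub_iff_add_eq]
    exact_mod_cast this
  rw [sum_powerset_apply_card fun j : ℕ => ((j : ℝ) + 1)⁻¹, sum_congr rfl fun j _ => hterm j,
    ← sum_div, hsum]

variable {n b : ℕ}

/-- `x` padded with `false` beyond its length, so that shifted indices need no bound proofs. -/
def seq (x : Fin n → Bool) (k : ℕ) : Bool :=
  if h : k < n then x ⟨k, h⟩ else false

lemma seq_of_lt (x : Fin n → Bool) {k : ℕ} (h : k < n) : seq x k = x ⟨k, h⟩ := dif_pos h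

def shiftDiffs (b : ℕ) (x : Fin n → Bool) : Finset ℕ :=
  (range (n - b)).filter fun k => seq x k ≠ seq x (k + b)

def deleteBurst (b : ℕ) (x : Fin n → Bool) (i : ℕ) : Fin (n - b) → Bool :=
  fun j => if (j : ℕ) < i then seq x j else seq x (j + b)

lemma seq_deleteBurst (x : Fin n → Bool) (i : ℕ) {k : ℕ} (hk : k < n - b) :
    seq (deleteBurst b x i) k = if k < i then seq x k else seq x (k + b) :=
  seq_of_lt _ hk

lemma mem_delBall_iff {x : Fin n → Bool} {y : Fin (n - b) → Bool} :
    y ∈ delBall b x ↔ ∃ i ≤ n - b, deleteBurst b x i = y := by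
  refine exists_congr fun i => and_congr_right fun _ => ?_
  rw [funext_iff]
  refine forall_congr' fun j => ?_
  have hj := j.isLt
  simp only [deleteBurst, seq_of_lt x (show (j : ℕ) < n by omega),
    seq_of_lt x (show (j : ℕ) + b < n by omega), eq_comm]

/-- Each difference of the shorter word is charged to one of `x`: a pair `(k, k + b)` straddling
the deleted burst compares `x k` with `x (k + 2b)`, so `x` differs at `k` or at `k + b`. -/
lemma card_shiftDiffs_deleteBurst_le (x : Fin n → Bool) (i : ℕ) :
    #(shiftDiffs b (deleteBurst b x i)) ≤ #(shiftDiffs b x) := by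
  set g : ℕ → ℕ := fun k => if k + b < i then k else if i ≤ k then k + b
      else if seq x k ≠ seq x (k + b) then k else k + b
  have hg : ∀ k, (g k = k ∧ k < i) ∨ (g k = k + b ∧ i ≤ k + b) := by
    intro k
    simp only [g]
    split_ifs <;> omega
  refine card_le_card_of_injOn g (fun k hk => ?_) (fun k₁ _ k₂ _ h => ?_)
  · simp only [shiftDiffs, coe_filter, mem_range, Set.mem_ofPred_eq] at hk ⊢
    obtain ⟨hkn, hk⟩ := hk
    rw [seq_deleteBurst x i (by omega), seq_deleteBurst x i (by omega)] at hk
    simp only [g]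
    split_ifs at hk ⊢ <;> refine ⟨by omega, ?_⟩ <;> grind
  · rcases hg k₁ with ⟨e₁, f₁⟩ | ⟨e₁, f₁⟩ <;> rcases hg k₂ with ⟨e₂, f₂⟩ | ⟨e₂, f₂⟩ <;> omega

lemma card_shiftDiffs_le_of_mem_delBall {x : Fin n → Bool} {y : Fin (n - b) → Bool}
    (hy : y ∈ delBall b x) : #(shiftDiffs b y) ≤ #(shiftDiffs b x) := by
  obtain ⟨i, -, rfl⟩ := mem_delBall_iff.mp hy
  exact card_shiftDiffs_deleteBurst_le x i

lemma deleteBurst_ne_of_mem_shiftDiffs {x : Fin n → Bool} {i k : ℕ} (hk : k ∈ shiftDiffs b x)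
    (hi : i ≤ k) : deleteBurst b x i ≠ deleteBurst b x (k + 1) := by
  rw [shiftDiffs, mem_filter, mem_range] at hk
  intro h
  have := congrFun h ⟨k, hk.1⟩
  simp only [deleteBurst, if_neg (show ¬k < i by omega), if_pos (Nat.lt_succ_self k)] at this
  exact hk.2 this.symm

lemma injOn_deleteBurst (x : Fin n → Bool) :
    Set.InjOn (deleteBurst b x) ↑(insert 0 ((shiftDiffs b x).image (· + 1))) := by
  have key : ∀ i j, j ∈ insert 0 ((shiftDiffs b x).image (· + 1)) → i < j →
      deleteBurst b x i ≠ deleteBurst b x j := by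
    intro i j hj hij
    obtain rfl | ⟨k, hk, rfl⟩ := by simpa using hj
    · omega
    · exact deleteBurst_ne_of_mem_shiftDiffs hk (by omega)
  intro i hi j hj h
  by_contra hne
  rcases lt_or_gt_of_ne hne with hlt | hlt
  exacts [key i j hj hlt h, key j i hi hlt h.symm]

lemma exists_finset_subset_delBall_card_eq (x : Fin n → Bool) :
    ∃ F : Finset (Fin (n - b) → Bool), ↑F ⊆ delBall b x ∧ #F = #(shiftDiffs b x) + 1 := by
  refine ⟨(insert 0 ((shiftDiffs b x).image (· + 1))).image (deleteBurst b x), ?_, ?_⟩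
  · rw [coe_image, Set.image_subset_iff]
    intro i hi
    refine mem_delBall_iff.mpr ⟨i, ?_, rfl⟩
    simp only [coe_insert, coe_image, shiftDiffs, coe_filter, mem_range] at hi
    grind
  · rw [card_image_of_injOn (injOn_deleteBurst x), card_insert_of_notMem (by simp),
      card_image_of_injective _ (add_left_injective 1)]

lemma exists_finset_subset_delBall_one_le_sum (x : Fin n → Bool) :
    ∃ F : Finset (Fin (n - b) → Bool), ↑F ⊆ delBall b x ∧
      1 ≤ ∑ y ∈ F, ((#(shiftDiffs b y) : ℝ) + 1)⁻¹ := by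
  obtain ⟨F, hF, hcard⟩ := exists_finset_subset_delBall_card_eq (b := b) x
  refine ⟨F, hF, ?_⟩
  have hle : ∀ y ∈ F, ((#(shiftDiffs b x) : ℝ) + 1)⁻¹ ≤ ((#(shiftDiffs b y) : ℝ) + 1)⁻¹ :=
    fun y hy => inv_anti₀ (by positivity)
      (add_le_add_left (Nat.cast_le.mpr (card_shiftDiffs_le_of_mem_delBall (hF hy))) 1)
  calc (1 : ℝ) = #F • ((#(shiftDiffs b x) : ℝ) + 1)⁻¹ := by
        rw [hcard, nsmul_eq_mul]; push_cast; field_simp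
    _ ≤ _ := card_nsmul_le_sum F _ _ hle

lemma eq_of_shiftDiffs_eq (hb : 0 < b) {y z : Fin n → Bool} (hpre : ∀ r < b, seq y r = seq z r)
    (h : shiftDiffs b y = shiftDiffs b z) : y = z := by
  suffices hseq : ∀ k, seq y k = seq z k from
    funext fun j => by simpa [seq_of_lt _ j.isLt] using hseq j
  intro k
  induction k using Nat.strong_induction_on with
  | _ k ih =>
    by_cases hkn : k < n
    · by_cases hkb : k < b
      · exact hpre k hkb
      have hmem := congrArg (k - b ∈ ·) h
      simp only [shiftDiffs, mem_filter, mem_range, Nat.sub_add_cancel (not_lt.mp hkb),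
        ih (k - b) (by omega), eq_iff_iff] at hmem
      rw [and_iff_right (by omega), and_iff_right (by omega), not_iff_not] at hmem
      revert hmem
      cases seq y k <;> cases seq z k <;> cases seq z (k - b) <;> decide
    · simp [seq, hkn]

lemma sum_inv_card_shiftDiffs_add_one (hb : 0 < b) (hbn : b ≤ n) :
    ∑ y : Fin n → Bool, ((#(shiftDiffs b y) : ℝ) + 1)⁻¹ =
      2 ^ b * ((2 ^ (n - b + 1) - 1) / ((n - b : ℕ) + 1)) := by
  classical
  set Φ : (Fin n → Bool) → (Fin b → Bool) × Finset ℕ :=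
    fun y => (fun r => seq y r, shiftDiffs b y)
  have hinj : Function.Injective Φ := fun y z h =>
    eq_of_shiftDiffs_eq hb (fun r hr => congrFun (congrArg Prod.fst h) ⟨r, hr⟩)
      (congrArg Prod.snd h)
  have himage : univ.image Φ = univ ×ˢ (range (n - b)).powerset := by
    refine eq_of_subset_of_card_le (fun p hp => ?_) ?_
    · obtain ⟨y, -, rfl⟩ := mem_image.mp hp
      simp [Φ, shiftDiffs]
    · rw [card_image_of_injective _ hinj, card_product, card_powerset, card_range, card_univ,
        card_univ, Fintype.card_fun, Fintype.card_fun, Fintype.card_bool, Fintype.card_fin,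
        Fintype.card_fin, ← pow_add, Nat.add_sub_cancel' hbn]
  calc ∑ y : Fin n → Bool, ((#(shiftDiffs b y) : ℝ) + 1)⁻¹
      = ∑ p ∈ univ.image Φ, ((#p.2 : ℝ) + 1)⁻¹ := by rw [sum_image hinj.injOn]
    _ = _ := by
      rw [himage, sum_product]
      dsimp only
      rw [sum_powerset_inv_card_add_one, sum_const, card_range, card_univ,
        Fintype.card_fun, Fintype.card_bool, Fintype.card_fin, nsmul_eq_mul]
      push_cast
      ring

end BurstDeletion

open BurstDeletion in
theorem burst_deletion_code_card_upper_bound_general (n b : ℕ) (hb : 0 < b)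
    (hn : 2 * b ≤ n) (C : Set (Fin n → Bool))
    (hC : ∀ x ∈ C, ∀ y ∈ C, x ≠ y → delBall b x ∩ delBall b y = ∅) :
    (C.ncard : ℝ) ≤ ((2 : ℝ) ^ (n - b + 1) - 2 ^ b) / ((n : ℝ) - 2 * b + 1) := by
  have hpack := ncard_le_sum_of_pairwiseDisjoint C.toFinite
    (fun x hx y hy hxy => Set.disjoint_iff_inter_eq_empty.mpr (hC x hx y hy hxy))
    (fun y => by positivity) (fun x _ => exists_finset_subset_delBall_one_le_sum x)
  rw [sum_inv_card_shiftDiffs_add_one hb (by omega)] at hpack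
  convert hpack using 1
  obtain ⟨m, rfl⟩ : ∃ m, n = m + 2 * b := ⟨n - 2 * b, by omega⟩
  rw [show m + 2 * b - b = m + b by omega, show m + b - b = m by omega, pow_add, add_comm m b,
    pow_add]
  push_cast
  field_simp
  ring

/-- any `b`-burst-deletion-correcting code `C ⊆ 𝔽₂ⁿ` (with `b ∣ n`, `n ≥ 2b`)
satisfies `|C| ≤ (2^{n−b+1} − 2^b)/(n − 2b + 1)`. -/
theorem burst_deletion_code_card_upper_bound (n b : ℕ) (hb : 0 < b) (hdvd : b ∣ n)
    (hn : 2 * b ≤ n) (C : Set (Fin n → Bool))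
    (hC : ∀ x ∈ C, ∀ y ∈ C, x ≠ y → delBall b x ∩ delBall b y = ∅) :
    (C.ncard : ℝ) ≤ ((2 : ℝ) ^ (n - b + 1) - 2 ^ b) / ((n : ℝ) - 2 * b + 1) :=
  burst_deletion_code_card_upper_bound_general n b hb hn C hC
end

section
/- Let n = 2^k with k ≥ 1. Then the number of vectors x ∈ 𝔽₂ⁿ in which every run has length at most k + 1 (that is, at most log₂(2n)) is at least 2^{n−1}. Equivalently, the redundancy n − log₂|S_n(log₂(2n))| of the log₂(2n)-RLL(n) constraint is at most 1. -/
/-!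
A vector violates the `f`-RLL constraint exactly when it is constant on some window
`[i, i + f]` with `i + f < n`. There are `n - f` such windows, and a vector constant on a given
window is determined by its `n - f` coordinates outside `(i, i + f]`, so at most
`(n - f) 2^(n - f)` vectors are bad. For `f = k + 1` and `n = 2^k` this is at most
`2^k 2^(n - k - 1) = 2^(n - 1)`, half of all vectors.
-/

section Window

variable {α : Type*}

def constOnWindow (n f i : ℕ) : Set (Fin n → α) :=
  { x | ∀ j (hj : i + j < n), j ≤ f → x ⟨i + j, hj⟩ = x ⟨i, by omega⟩ }

def collapseWindow {n : ℕ} (i f : ℕ) (x : Fin n → α) : Fin (n - f) → α :=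
  fun j => if (j : ℕ) ≤ i then x ⟨j, by omega⟩ else x ⟨j + f, by omega⟩

theorem injOn_collapseWindow {n i f : ℕ} (h : i + f < n) :
    Set.InjOn (collapseWindow (α := α) i f) (constOnWindow n f i) := by
  intro x hx y hy hxy
  have key (q : ℕ) (hq : q < n - f) := congrFun hxy ⟨q, hq⟩
  funext ⟨p, hp⟩
  rcases le_or_gt p i with hpi | hpi
  · simpa [collapseWindow, hpi] using key p (by omega)
  rcases le_or_gt p (i + f) with hpf | hpf
  · obtain ⟨j, rfl⟩ : ∃ j, p = i + j := ⟨p - i, by omega⟩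
    rw [hx j hp (by omega), hy j hp (by omega)]
    simpa [collapseWindow] using key i (by omega)
  · obtain ⟨q, rfl⟩ : ∃ q, p = q + f := ⟨p - f, by omega⟩
    simpa [collapseWindow, show ¬q ≤ i by omega] using key q (by omega)

theorem ncard_constOnWindow_le [Fintype α] {n i f : ℕ} (h : i + f < n) :
    (constOnWindow (α := α) n f i).ncard ≤ Fintype.card α ^ (n - f) := by
  calc (constOnWindow n f i).ncard
      ≤ (Set.univ : Set (Fin (n - f) → α)).ncard :=
        Set.ncard_le_ncard_of_injOn _ (fun _ _ ↦ trivial) (injOn_collapseWindow h)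
    _ = Fintype.card α ^ (n - f) := by simp

end Window

theorem compl_setOf_maxRunLe_subset (n f : ℕ) :
    { x : Fin n → Bool | maxRunLe f x }ᶜ ⊆ ⋃ i ∈ Finset.range (n - f), constOnWindow n f i := by
  intro x hx
  simp only [Set.mem_compl_iff, Set.mem_ofPred_eq, maxRunLe, not_forall, not_exists,
    not_not] at hx
  obtain ⟨i, hi, hconst⟩ := hx
  exact Set.mem_biUnion (Finset.mem_range.mpr (by omega)) fun j _ hj ↦ hconst j hj

theorem two_pow_le_add_ncard_setOf_maxRunLe (n f : ℕ) :
    2 ^ n ≤ (n - f) * 2 ^ (n - f) + { x : Fin n → Bool | maxRunLe f x }.ncard := by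
  set s := { x : Fin n → Bool | maxRunLe f x }
  have hbad : sᶜ.ncard ≤ (n - f) * 2 ^ (n - f) :=
    calc sᶜ.ncard ≤ (⋃ i ∈ Finset.range (n - f), constOnWindow n f i).ncard :=
          Set.ncard_le_ncard (compl_setOf_maxRunLe_subset n f)
      _ ≤ ∑ i ∈ Finset.range (n - f), (constOnWindow (α := Bool) n f i).ncard :=
          Finset.set_ncard_biUnion_le _ _
      _ ≤ ∑ _i ∈ Finset.range (n - f), 2 ^ (n - f) := Finset.sum_le_sum fun i hi ↦
          ncard_constOnWindow_le (by simp only [Finset.mem_range] at hi; omega)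
      _ = (n - f) * 2 ^ (n - f) := by simp
  have hall : s.ncard + sᶜ.ncard = 2 ^ n := by
    rw [Set.ncard_add_ncard_compl, Nat.card_eq_fintype_card, Fintype.card_fun,
      Fintype.card_bool, Fintype.card_fin]
  omega

theorem rll_log2n_redundancy_le_one_general (k : ℕ) (n : ℕ) (hn : n = 2 ^ k) :
    2 ^ (n - 1) ≤ Set.ncard { x : Fin n → Bool | maxRunLe (k + 1) x } := by
  have hkn : k < n := hn ▸ Nat.lt_two_pow_self
  have hbad : (n - (k + 1)) * 2 ^ (n - (k + 1)) ≤ 2 ^ (n - 1) :=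
    calc (n - (k + 1)) * 2 ^ (n - (k + 1)) ≤ 2 ^ k * 2 ^ (n - (k + 1)) := by gcongr; omega
      _ = 2 ^ (n - 1) := by rw [← pow_add]; congr 1; omega
  have hhalf : 2 ^ n = 2 ^ (n - 1) + 2 ^ (n - 1) := by
    rw [← two_mul, ← pow_succ']; congr 1; omega
  have := two_pow_le_add_ncard_setOf_maxRunLe n (k + 1)
  omega

/-- for `n = 2^k`, `k ≥ 1`, the number of `x ∈ 𝔽₂ⁿ` all of whose runs have
length at most `k + 1 = log₂(2n)` is at least `2^{n−1}`; i.e., the redundancy of the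
`log₂(2n)`-RLL(n) constraint is at most 1. -/
theorem rll_log2n_redundancy_le_one (k : ℕ) (hk : 1 ≤ k) (n : ℕ) (hn : n = 2 ^ k) :
    2 ^ (n - 1) ≤ Set.ncard { x : Fin n → Bool | maxRunLe (k + 1) x } :=
  rll_log2n_redundancy_le_one_general k n hn
end

section
/- Let n = 2^k with k ≥ 1. Then there exists an integer a with 0 ≤ a ≤ n such that |VT_a(n) ∩ S_n(k+1)| ≥ 2^{n−1} / (n + 1); in particular the redundancy of this run-length-limited VT-code is at most log₂(n+1) + 1 bits. -/
open Finset

/-!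
Call a vector bad if it has a run of length at least `k + 2`. Such a run starts at one of at most
`n - k - 1` positions, and fixing its start leaves at most `2 ^ (n - k - 1)` vectors; since
`n - k - 1 ≤ 2 ^ k`, at most `2 ^ (n - 1)` vectors are bad, so at least half of all `2 ^ n`
vectors lie in `S_n(k + 1)`. The `n + 1` codes `VT_a(n)` partition `𝔽₂ⁿ`, so by pigeonhole one
of them contains at least a `1 / (n + 1)` fraction of `S_n(k + 1)`.
-/

theorem card_filter_forall_eq_le {ι : Type*} [Fintype ι] [DecidableEq ι] (s : Finset ι) {i : ι}
    (hi : i ∉ s) : #{z : ι → Bool | ∀ p ∈ s, z p = z i} ≤ 2 ^ (Fintype.card ι - #s) := by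
  calc #{z : ι → Bool | ∀ p ∈ s, z p = z i}
      ≤ #(univ : Finset ({p // p ∉ s} → Bool)) := by
        refine card_le_card_of_injOn (fun z p => z p) (fun _ _ => mem_coe.2 (mem_univ _)) ?_
        intro z₁ h₁ z₂ h₂ heq
        simp only [coe_filter, mem_univ, true_and, Set.mem_ofPred_eq] at h₁ h₂
        funext p
        by_cases hp : p ∈ s
        · rw [h₁ p hp, h₂ p hp]
          exact congrFun heq ⟨i, hi⟩
        · exact congrFun heq ⟨p, hp⟩
    _ = 2 ^ (Fintype.card ι - #s) := by simp [Fintype.card_subtype_compl]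

/-- The positions `i + 1, …, i + f`: a run of length `> f` starting at `i` covers them. -/
def runWindow {n : ℕ} (f : ℕ) (i : Fin (n - f)) : Finset (Fin n) :=
  Ioc (i.castLE (Nat.sub_le n f)) ⟨i + f, Nat.add_lt_of_lt_sub i.isLt⟩

theorem card_runWindow {n : ℕ} (f : ℕ) (i : Fin (n - f)) : #(runWindow f i) = f := by
  simp [runWindow, Fin.card_Ioc]

theorem castLE_notMem_runWindow {n : ℕ} (f : ℕ) (i : Fin (n - f)) :
    i.castLE (Nat.sub_le n f) ∉ runWindow f i := by
  simp [runWindow]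

theorem exists_runWindow_of_not_maxRunLe {n f : ℕ} {z : Fin n → Bool} (h : ¬ maxRunLe f z) :
    ∃ i : Fin (n - f), ∀ p ∈ runWindow f i, z p = z (i.castLE (Nat.sub_le n f)) := by
  simp only [maxRunLe] at h
  push Not at h
  obtain ⟨i, hi, hconst⟩ := h
  refine ⟨⟨i, by omega⟩, fun p hp => ?_⟩
  simp only [runWindow, mem_Ioc, Fin.lt_def, Fin.le_def, Fin.val_castLE] at hp
  convert hconst (p - i) (by omega) using 2
  · ext
    simp only
    omega
  · rfl

theorem ncard_not_maxRunLe_le (n f : ℕ) :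
    {z : Fin n → Bool | ¬ maxRunLe f z}.ncard ≤ (n - f) * 2 ^ (n - f) := by
  have hcover : {z : Fin n → Bool | ¬ maxRunLe f z} ⊆ ↑(univ.biUnion fun i =>
      {z : Fin n → Bool | ∀ p ∈ runWindow f i, z p = z (i.castLE (Nat.sub_le n f))}) := by
    intro z hz
    obtain ⟨i, hi⟩ := exists_runWindow_of_not_maxRunLe hz
    exact mem_biUnion.2 ⟨i, mem_univ _, mem_filter.2 ⟨mem_univ _, hi⟩⟩
  have hwindow (i : Fin (n - f)) :
      #{z : Fin n → Bool | ∀ p ∈ runWindow f i, z p = z (i.castLE (Nat.sub_le n f))}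
        ≤ 2 ^ (n - f) := by
    convert card_filter_forall_eq_le _ (castLE_notMem_runWindow f i) <;>
      simp [card_runWindow]
  calc {z : Fin n → Bool | ¬ maxRunLe f z}.ncard
      ≤ #(univ : Finset (Fin (n - f))) * 2 ^ (n - f) :=
        (Set.ncard_le_ncard hcover).trans <| (Set.ncard_coe_finset _).trans_le <|
          card_biUnion_le_card_mul _ _ _ fun i _ => hwindow i
    _ = (n - f) * 2 ^ (n - f) := by simp

theorem two_pow_le_two_mul_ncard_maxRunLe {n k : ℕ} (hn : n ≤ 2 ^ k + k + 1) :
    2 ^ n ≤ 2 * {z : Fin n → Bool | maxRunLe (k + 1) z}.ncard := by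
  have hsplit := Set.ncard_add_ncard_compl {z : Fin n → Bool | maxRunLe (k + 1) z}
  rw [Set.compl_ofPred] at hsplit
  simp only [Nat.card_eq_fintype_card, Fintype.card_fun, Fintype.card_bool,
    Fintype.card_fin] at hsplit
  have hbad := ncard_not_maxRunLe_le n (k + 1)
  have hbound : 2 * ((n - (k + 1)) * 2 ^ (n - (k + 1))) ≤ 2 ^ n := by
    rcases le_or_gt n (k + 1) with h | h
    · simp [Nat.sub_eq_zero_of_le h]
    · calc 2 * ((n - (k + 1)) * 2 ^ (n - (k + 1))) ≤ 2 * (2 ^ k * 2 ^ (n - (k + 1))) := by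
            gcongr; omega
        _ = 2 ^ n := by
            rw [← mul_assoc, ← pow_succ', ← pow_add]
            congr 1
            omega
  omega

theorem exists_VT_ncard_inter_ge (n : ℕ) (S : Set (Fin n → Bool)) :
    ∃ a ≤ n, (S.ncard : ℝ) / (n + 1) ≤ {x | x ∈ VT n a ∧ x ∈ S}.ncard := by
  classical
  set syndrome : (Fin n → Bool) → ℕ :=
    fun x => (∑ i : Fin n, ((i : ℕ) + 1) * (x i).toNat) % (n + 1)
  have hcount : #(range (n + 1)) • ((S.ncard : ℝ) / (n + 1)) ≤ #S.toFinset := by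
    rw [card_range, nsmul_eq_mul, ← Set.ncard_eq_toFinset_card']
    push_cast
    rw [mul_div_cancel₀ _ (by positivity)]
  obtain ⟨a, ha, hfiber⟩ := exists_le_card_fiber_of_nsmul_le_card_of_maps_to (f := syndrome)
    (fun x _ => mem_range.2 (Nat.mod_lt _ n.succ_pos)) nonempty_range_add_one hcount
  have ha : a < n + 1 := mem_range.1 ha
  refine ⟨a, by omega, ?_⟩
  refine hfiber.trans_eq ?_
  rw [← Set.ncard_coe_finset]
  congr 2
  ext x
  simp [VT, Nat.ModEq, syndrome, Nat.mod_eq_of_lt ha, and_comm]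

theorem exists_RLL_VT_code_large_general (k : ℕ) (n : ℕ) (hn : n = 2 ^ k) :
    ∃ a ≤ n, ((Set.ncard { x : Fin n → Bool | x ∈ VT n a ∧ maxRunLe (k + 1) x } : ℝ))
      ≥ (2 : ℝ) ^ (n - 1) / ((n : ℝ) + 1) := by
  obtain ⟨a, ha, hcode⟩ := exists_VT_ncard_inter_ge n {x | maxRunLe (k + 1) x}
  refine ⟨a, ha, le_trans ?_ hcode⟩
  have hhalf := two_pow_le_two_mul_ncard_maxRunLe (n := n) (k := k) (by omega)
  have hsucc : 2 ^ n = 2 ^ (n - 1) * 2 := (Nat.two_pow_pred_mul_two (hn ▸ Nat.two_pow_pos k)).symm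
  gcongr
  exact_mod_cast (show 2 ^ (n - 1) ≤ {x : Fin n → Bool | maxRunLe (k + 1) x}.ncard by omega)

/-- for `n = 2^k`, `k ≥ 1`, there exists `0 ≤ a ≤ n` with
`|VT_a(n) ∩ S_n(k+1)| ≥ 2^{n−1}/(n+1)`, i.e., the redundancy of this run-length-limited
VT-code is at most `log₂(n+1) + 1` bits. -/
theorem exists_RLL_VT_code_large (k : ℕ) (hk : 1 ≤ k) (n : ℕ) (hn : n = 2 ^ k) :
    ∃ a ≤ n, ((Set.ncard { x : Fin n → Bool | x ∈ VT n a ∧ maxRunLe (k + 1) x } : ℝ))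
      ≥ (2 : ℝ) ^ (n - 1) / ((n : ℝ) + 1) :=
  exists_RLL_VT_code_large_general k n hn
end

section
/- For all 0 ≤ c < P and d ∈ {0,1}, the shifted Varshamov–Tenengolts code SVT_{c,d}(n,P) is a P-bounded single-deletion-correcting code. Precisely: if x, y ∈ SVT_{c,d}(n,P) and there exist indices 1 ≤ k, ℓ ≤ n with |ℓ − k| < P such that the vector obtained from x by deleting its k-th coordinate equals the vector obtained from y by deleting its ℓ-th coordinate, then x = y. -/
lemma delOne_succAbove {m : ℕ} (x : Fin (m+1) → Bool) (k : Fin (m+1)) (j : Fin m) :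
    delOne x (k : ℕ) j = x (k.succAbove j) := by
  simp only [delOne, Fin.succAbove, Fin.lt_def, Fin.coe_castSucc]
  split_ifs with h <;> rfl

lemma coe_succAbove {m : ℕ} (k : Fin (m+1)) (j : Fin m) :
    ((k.succAbove j : Fin (m+1)) : ℕ) = if (j:ℕ) < (k:ℕ) then (j:ℕ) else (j:ℕ)+1 := by
  simp [Fin.succAbove, Fin.lt_def, apply_ite (Fin.val)]

lemma sum_decomp {m : ℕ} (x : Fin (m+1) → Bool) (k : Fin (m+1)) (g : ℕ → ℕ) :
    ∑ i : Fin (m+1), g i * (x i).toNat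
      = g k * (x k).toNat + ∑ j : Fin m, g (k.succAbove j) * ((delOne x (k:ℕ)) j).toNat := by
  rw [Fin.sum_univ_succAbove (fun i => g i * (x i).toNat) k]
  simp only [delOne_succAbove]

lemma aux1 {m P c d : ℕ} (hP : 0 < P)
    (x y : Fin (m+1) → Bool) (hx : x ∈ SVT (m+1) P c d) (hy : y ∈ SVT (m+1) P c d)
    (k l : Fin (m+1)) (hle : (k:ℕ) ≤ (l:ℕ)) (hkl : (l:ℕ) - (k:ℕ) < P)
    (h : delOne x (k:ℕ) = delOne y (l:ℕ)) : x = y := by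
  set z : Fin m → Bool := delOne x (k:ℕ) with hz
  have hzy : (delOne y (l:ℕ) : Fin m → Bool) = z := h.symm
  -- parity: x k = y l
  have wx := sum_decomp x k (fun _ => 1)
  have wy := sum_decomp y l (fun _ => 1)
  simp only [one_mul, hzy, ← hz] at wx wy
  have hpar : ((x k).toNat + ∑ j : Fin m, (z j).toNat) % 2
      = ((y l).toNat + ∑ j : Fin m, (z j).toNat) % 2 := by
    have e1 : _ % 2 = _ % 2 := hx.2
    have e2 : _ % 2 = _ % 2 := hy.2
    rw [wx] at e1; rw [wy] at e2
    omega
  have hb : x k = y l := by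
    cases hxk : x k <;> cases hyl : y l <;> simp [hxk, hyl] at hpar ⊢ <;> omega
  -- weighted sums
  have sx := sum_decomp x k (fun t => t + 1)
  have sy := sum_decomp y l (fun t => t + 1)
  simp only [hzy, ← hz] at sx sy
  set T : ℕ := ∑ j : Fin m, (if (k:ℕ) ≤ (j:ℕ) ∧ (j:ℕ) < (l:ℕ) then (z j).toNat else 0) with hT
  set Ay : ℕ := ∑ j : Fin m, (((l.succAbove j : Fin (m+1)):ℕ) + 1) * (z j).toNat with hAy
  have hAx : ∑ j : Fin m, (((k.succAbove j : Fin (m+1)):ℕ) + 1) * (z j).toNat = Ay + T := by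
    rw [hAy, hT, ← Finset.sum_add_distrib]
    refine Finset.sum_congr rfl fun j _ => ?_
    cases hzj : z j <;>
      simp only [coe_succAbove, Bool.toNat_false, Bool.toNat_true, mul_zero, mul_one,
        Nat.add_zero, Nat.zero_add] <;> split_ifs <;> omega
  have hlm : (l:ℕ) < m + 1 := l.isLt
  -- T ≤ l - k
  have hTle : T ≤ (l:ℕ) - (k:ℕ) := by
    have h1 : T ≤ ∑ j : Fin m, (if (k:ℕ) ≤ (j:ℕ) ∧ (j:ℕ) < (l:ℕ) then 1 else 0) := by
      refine Finset.sum_le_sum fun j _ => ?_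
      split_ifs <;> cases z j <;> simp
    have h2 : (∑ j : Fin m, (if (k:ℕ) ≤ (j:ℕ) ∧ (j:ℕ) < (l:ℕ) then 1 else 0)) = (l:ℕ) - (k:ℕ) := by
      rw [Fin.sum_univ_eq_sum_range (fun j => if (k:ℕ) ≤ j ∧ j < (l:ℕ) then 1 else 0) m]
      rw [← Finset.sum_filter]
      have hf : (Finset.range m).filter (fun j => (k:ℕ) ≤ j ∧ j < (l:ℕ)) = Finset.Ico (k:ℕ) (l:ℕ) := by
        ext a; simp [Finset.mem_filter, Finset.mem_range, Finset.mem_Ico]; omega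
      rw [hf, Finset.sum_const, Nat.card_Ico, smul_eq_mul, mul_one]
    omega
  -- main congruence
  have hmain : ((k:ℕ)+1) * (x k).toNat + (Ay + T) ≡ ((l:ℕ)+1) * (x k).toNat + Ay [MOD P] := by
    have e1 := hx.1
    have e2 := hy.1
    rw [sx, hAx] at e1
    rw [sy, ← hb] at e2
    exact e1.trans e2.symm
  -- window claim
  have hwin : ∀ j : Fin m, (k:ℕ) ≤ (j:ℕ) → (j:ℕ) < (l:ℕ) → z j = x k := by
    intro j hjk hjl
    cases hxk : x k
    · -- b = 0 : T ≡ 0, T < P ⇒ T = 0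
      rw [hxk] at hmain
      simp only [Bool.toNat_false, mul_zero, Nat.zero_add] at hmain
      have hm2 : Ay + T ≡ Ay + 0 [MOD P] := by simpa using hmain
      have hT0 : T = 0 := by
        have h3 : T % P = 0 % P := Nat.ModEq.add_left_cancel' Ay hm2
        rw [Nat.zero_mod, Nat.mod_eq_of_lt (by omega)] at h3
        exact h3
      have h4 := (Finset.sum_eq_zero_iff.mp hT0) j (Finset.mem_univ j)
      rw [if_pos ⟨hjk, hjl⟩] at h4
      cases hzj : z j
      · rfl
      · rw [hzj] at h4; simp at h4
    · rw [hxk] at hmain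
      simp only [Bool.toNat_true, mul_one] at hmain
      have hm2 : (((k:ℕ)+1) + Ay) + T ≡ (((k:ℕ)+1) + Ay) + ((l:ℕ) - (k:ℕ)) [MOD P] := by
        have ee1 : ((k:ℕ)+1) + (Ay + T) = (((k:ℕ)+1) + Ay) + T := by omega
        have ee2 : ((l:ℕ)+1) + Ay = (((k:ℕ)+1) + Ay) + ((l:ℕ) - (k:ℕ)) := by omega
        rw [ee1, ee2] at hmain
        exact hmain
      have hTeq : T = (l:ℕ) - (k:ℕ) := by
        have h3 : T % P = ((l:ℕ) - (k:ℕ)) % P := Nat.ModEq.add_left_cancel' _ hm2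
        rw [Nat.mod_eq_of_lt (by omega), Nat.mod_eq_of_lt (by omega)] at h3
        exact h3
      have hsum : (∑ j : Fin m, (if (k:ℕ) ≤ (j:ℕ) ∧ (j:ℕ) < (l:ℕ) then (z j).toNat else 0))
          = (∑ j : Fin m, (if (k:ℕ) ≤ (j:ℕ) ∧ (j:ℕ) < (l:ℕ) then 1 else 0)) := by
        rw [← hT, hTeq]
        rw [Fin.sum_univ_eq_sum_range (fun j => if (k:ℕ) ≤ j ∧ j < (l:ℕ) then 1 else 0) m,
          ← Finset.sum_filter]
        have hf : (Finset.range m).filter (fun j => (k:ℕ) ≤ j ∧ j < (l:ℕ)) = Finset.Ico (k:ℕ) (l:ℕ) := by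
          ext a; simp [Finset.mem_filter, Finset.mem_range, Finset.mem_Ico]; omega
        rw [hf, Finset.sum_const, Nat.card_Ico, smul_eq_mul, mul_one]
      have hpt := (Finset.sum_eq_sum_iff_of_le (fun j _ => by
        split_ifs <;> cases z j <;> simp)).mp hsum j (Finset.mem_univ j)
      rw [if_pos ⟨hjk, hjl⟩, if_pos ⟨hjk, hjl⟩] at hpt
      cases hzj : z j
      · rw [hzj] at hpt; simp at hpt
      · rfl
  -- reconstruct
  have hzx1 : ∀ (j : ℕ) (hj : j < m), j < (k:ℕ) → z ⟨j, hj⟩ = x ⟨j, by omega⟩ := by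
    intro j hj hjk; rw [hz]; show delOne x (k:ℕ) ⟨j, hj⟩ = _
    simp [delOne, hjk]
  have hzx2 : ∀ (j : ℕ) (hj : j < m), (k:ℕ) ≤ j → z ⟨j, hj⟩ = x ⟨j+1, by omega⟩ := by
    intro j hj hjk; rw [hz]; show delOne x (k:ℕ) ⟨j, hj⟩ = _
    simp [delOne, Nat.not_lt.mpr hjk]
  have hzy1 : ∀ (j : ℕ) (hj : j < m), j < (l:ℕ) → z ⟨j, hj⟩ = y ⟨j, by omega⟩ := by
    intro j hj hjl; rw [← hzy]; show delOne y (l:ℕ) ⟨j, hj⟩ = _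
    simp [delOne, hjl]
  have hzy2 : ∀ (j : ℕ) (hj : j < m), (l:ℕ) ≤ j → z ⟨j, hj⟩ = y ⟨j+1, by omega⟩ := by
    intro j hj hjl; rw [← hzy]; show delOne y (l:ℕ) ⟨j, hj⟩ = _
    simp [delOne, Nat.not_lt.mpr hjl]
  funext i
  have him : (i:ℕ) < m + 1 := i.isLt
  rcases Nat.lt_trichotomy (i:ℕ) (k:ℕ) with h1 | h1 | h1
  · -- i < k ≤ l
    have hi' : (i:ℕ) < m := by omega
    have e1 : x (⟨(i:ℕ), by omega⟩ : Fin (m+1)) = z ⟨(i:ℕ), hi'⟩ := (hzx1 (i:ℕ) hi' h1).symm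
    have e2 : z ⟨(i:ℕ), hi'⟩ = y ⟨(i:ℕ), by omega⟩ := hzy1 (i:ℕ) hi' (by omega)
    exact e1.trans e2
  · -- i = k
    have hik : i = k := Fin.ext h1
    rcases Nat.lt_or_ge (k:ℕ) (l:ℕ) with h2 | h2
    · have hkm : (k:ℕ) < m := by omega
      have e : z ⟨(k:ℕ), hkm⟩ = y ⟨(k:ℕ), by omega⟩ := hzy1 (k:ℕ) hkm h2
      have e2 : x k = z ⟨(k:ℕ), hkm⟩ := (hwin ⟨(k:ℕ), hkm⟩ (Nat.le_refl _) h2).symm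
      rw [hik]
      exact e2.trans e
    · have hkl2 : k = l := Fin.ext (by omega)
      rw [hik, hkl2]
      exact hkl2 ▸ hb
  · -- k < i
    have hi1 : (i:ℕ) - 1 < m := by omega
    have hxi : x i = z ⟨(i:ℕ) - 1, hi1⟩ := by
      rw [hzx2 ((i:ℕ)-1) hi1 (by omega)]
      congr 1
      exact Fin.ext (by simp; omega)
    rcases Nat.lt_trichotomy (i:ℕ) (l:ℕ) with h2 | h2 | h2
    · have hi' : (i:ℕ) < m := by omega
      have e2 : z ⟨(i:ℕ)-1, hi1⟩ = x k := hwin _ (by simp; omega) (by simp; omega)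
      have e3 : x k = z ⟨(i:ℕ), hi'⟩ := (hwin _ (by simp; omega) (by simp; omega)).symm
      have e4 : z ⟨(i:ℕ), hi'⟩ = y ⟨(i:ℕ), by omega⟩ := hzy1 (i:ℕ) hi' h2
      exact ((hxi.trans e2).trans e3).trans e4
    · have hil : i = l := Fin.ext h2
      have e2 : z ⟨(i:ℕ)-1, hi1⟩ = x k := hwin _ (by simp; omega) (by simp; omega)
      rw [hxi, e2, hb, hil]
    · have e : z ⟨(i:ℕ)-1, hi1⟩ = y ⟨(i:ℕ)-1+1, by omega⟩ := hzy2 _ hi1 (by omega)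
      have e2 : y (⟨(i:ℕ)-1+1, by omega⟩ : Fin (m+1)) = y i := by
        congr 1
        exact Fin.ext (by simp; omega)
      exact hxi.trans (e.trans e2)

/-- the shifted VT code `SVT_{c,d}(n,P)` is a `P`-bounded
single-deletion-correcting code: if deleting coordinate `k` of `x` and coordinate `ℓ`
of `y` give the same vector and `|ℓ − k| < P`, then `x = y`. -/
theorem SVT_P_bounded_single_deletion_correcting (n P c d : ℕ)
    (hP : 0 < P) (hc : c < P) (hd : d < 2)
    (x y : Fin n → Bool) (hx : x ∈ SVT n P c d) (hy : y ∈ SVT n P c d)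
    (k l : Fin n) (hkl : |(k : ℤ) - (l : ℤ)| < (P : ℤ))
    (h : delOne x (k : ℕ) = delOne y (l : ℕ)) : x = y := by
  cases n with
  | zero => exact k.elim0
  | succ m =>
    rw [abs_lt] at hkl
    obtain ⟨hkl1, hkl2⟩ := hkl
    rcases le_or_gt (k:ℕ) (l:ℕ) with hle | hlt
    · exact aux1 hP x y hx hy k l hle (by omega) h
    · exact (aux1 hP y x hy hx l k (Nat.le_of_lt hlt) (by omega) h.symm).symm
end

section
/- Let b divide n, set m = n/b, and let P ≥ 2 be an integer. Let C₁ ⊆ VT_a(m) be a set of vectors (for some 0 ≤ a ≤ m) in which every codeword has all runs of length at most P − 1, and let C₂ = SVT_{c,d}(m,P) for some 0 ≤ c < P and d ∈ {0,1}. Then the code C = { x ∈ 𝔽₂ⁿ : A_b(x)₁ ∈ C₁ and A_b(x)_i ∈ C₂ for all 2 ≤ i ≤ b } is a b-burst-deletion-correcting code. -/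
namespace BurstAux

def eN {m : ℕ} (x : Fin m → Bool) (t : ℕ) : ℕ :=
  if h : t < m then (x ⟨t, h⟩).toNat else 0

lemma eN_le_one {m : ℕ} (x : Fin m → Bool) (t : ℕ) : eN x t ≤ 1 := by
  unfold eN; split
  · exact Bool.toNat_le _
  · omega

lemma eN_lt {m : ℕ} (x : Fin m → Bool) (t : ℕ) (h : t < m) :
    eN x t = (x ⟨t, h⟩).toNat := dif_pos h

def Sw {m : ℕ} (x : Fin m → Bool) : ℕ := ∑ t ∈ Finset.range m, eN x t
def Ww {m : ℕ} (x : Fin m → Bool) : ℕ := ∑ t ∈ Finset.range m, (t + 1) * eN x t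

lemma Sw_spec {m : ℕ} (x : Fin m → Bool) : (∑ i : Fin m, (x i).toNat) = Sw x := by
  unfold Sw
  rw [← Fin.sum_univ_eq_sum_range (fun t => eN x t) m]
  exact Finset.sum_congr rfl fun i _ => by simp [eN]

lemma Ww_spec {m : ℕ} (x : Fin m → Bool) :
    (∑ i : Fin m, ((i : ℕ) + 1) * (x i).toNat) = Ww x := by
  unfold Ww
  rw [← Fin.sum_univ_eq_sum_range (fun t => (t + 1) * eN x t) m]
  exact Finset.sum_congr rfl fun i _ => by simp [eN]

lemma delOne_eN {m : ℕ} (x : Fin m → Bool) (k t : ℕ) (ht : t < m - 1) :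
    eN (delOne x k) t = if t < k then eN x t else eN x (t + 1) := by
  have h1 : t < m := by omega
  have h2 : t + 1 < m := by omega
  simp only [eN, dif_pos ht, dif_pos h1, dif_pos h2, delOne]
  split <;> rfl

lemma sum_split (F : ℕ → ℕ) (m k : ℕ) (hk : k < m) :
    ∑ t ∈ Finset.range m, F t
      = (∑ t ∈ Finset.range k, F t) + F k + ∑ t ∈ Finset.Ico (k + 1) m, F t := by
  rw [Finset.range_eq_Ico, ← Finset.sum_Ico_consecutive _ (Nat.zero_le k) (le_of_lt hk),
      Finset.sum_eq_sum_Ico_succ_bot hk, ← Finset.range_eq_Ico]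
  ring

lemma shift_Ico (F : ℕ → ℕ) (k m : ℕ) :
    ∑ t ∈ Finset.Ico k (m - 1), F (t + 1) = ∑ t ∈ Finset.Ico (k + 1) m, F t := by
  rw [Finset.sum_Ico_eq_sum_range, Finset.sum_Ico_eq_sum_range,
      show m - 1 - k = m - (k + 1) by omega]
  exact Finset.sum_congr rfl fun t _ => by congr 1; omega

lemma del_split (w : ℕ → ℕ) {m : ℕ} (x : Fin m → Bool) (k : ℕ) (hk : k < m) :
    ∑ t ∈ Finset.range (m - 1), w t * eN (delOne x k) t
      = (∑ t ∈ Finset.range k, w t * eN x t)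
        + ∑ t ∈ Finset.Ico k (m - 1), w t * eN x (t + 1) := by
  rw [Finset.range_eq_Ico,
      ← Finset.sum_Ico_consecutive _ (Nat.zero_le k) (by omega : k ≤ m - 1),
      ← Finset.range_eq_Ico]
  congr 1
  · refine Finset.sum_congr rfl fun t ht => ?_
    have ht' := Finset.mem_range.mp ht
    rw [delOne_eN x k t (by omega), if_pos ht']
  · refine Finset.sum_congr rfl fun t ht => ?_
    obtain ⟨h1, h2⟩ := Finset.mem_Ico.mp ht
    rw [delOne_eN x k t h2, if_neg (by omega)]

lemma del_decomp {m : ℕ} (x : Fin m → Bool) (k : ℕ) (hk : k < m) :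
    Sw x = Sw (delOne x k) + eN x k ∧
    Ww x = Ww (delOne x k) + (k + 1) * eN x k
      + ∑ t ∈ Finset.Ico k (m - 1), eN (delOne x k) t := by
  have htail : (∑ t ∈ Finset.Ico k (m - 1), eN (delOne x k) t)
      = ∑ t ∈ Finset.Ico (k + 1) m, eN x t := by
    rw [← shift_Ico (eN x) k m]
    refine Finset.sum_congr rfl fun t ht => ?_
    obtain ⟨h1, h2⟩ := Finset.mem_Ico.mp ht
    rw [delOne_eN x k t h2, if_neg (by omega)]
  constructor
  · have h1 : Sw x = (∑ t ∈ Finset.range k, eN x t) + eN x k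
        + ∑ t ∈ Finset.Ico (k + 1) m, eN x t := sum_split (eN x) m k hk
    have h2 : Sw (delOne x k) = (∑ t ∈ Finset.range k, eN x t)
        + ∑ t ∈ Finset.Ico k (m - 1), eN x (t + 1) := by
      have := del_split (fun _ => 1) x k hk
      simpa [Sw] using this
    rw [h1, h2, shift_Ico]
    ring
  · have h1 : Ww x = (∑ t ∈ Finset.range k, (t + 1) * eN x t) + (k + 1) * eN x k
        + ∑ t ∈ Finset.Ico (k + 1) m, (t + 1) * eN x t :=
      sum_split (fun t => (t + 1) * eN x t) m k hk
    have h2 : Ww (delOne x k) = (∑ t ∈ Finset.range k, (t + 1) * eN x t)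
        + ∑ t ∈ Finset.Ico k (m - 1), (t + 1) * eN x (t + 1) :=
      del_split (fun t => t + 1) x k hk
    have h3 : (∑ t ∈ Finset.Ico k (m - 1), (t + 1) * eN x (t + 1))
        = ∑ t ∈ Finset.Ico (k + 1) m, t * eN x t :=
      shift_Ico (fun t => t * eN x t) k m
    have h4 : (∑ t ∈ Finset.Ico (k + 1) m, (t + 1) * eN x t)
        = (∑ t ∈ Finset.Ico (k + 1) m, t * eN x t)
          + ∑ t ∈ Finset.Ico (k + 1) m, eN x t := by
      rw [← Finset.sum_add_distrib]
      exact Finset.sum_congr rfl fun t _ => by ring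
  
    rw [h1, h2, h3, htail, h4]
    ring

end BurstAux



namespace BurstAux

lemma core_eqs {m : ℕ} (x y : Fin m → Bool) (k k' : ℕ) (hkk : k ≤ k') (hk' : k' < m)
    (hdel : delOne x k = delOne y k') :
    Sw x + eN y k' = Sw y + eN x k ∧
    Ww x + (k' + 1) * eN y k'
      = Ww y + (k + 1) * eN x k + ∑ t ∈ Finset.Ico k k', eN (delOne y k') t := by
  obtain ⟨hs1, hw1⟩ := del_decomp x k (lt_of_le_of_lt hkk hk')
  obtain ⟨hs2, hw2⟩ := del_decomp y k' hk'
  rw [hdel] at hs1 hw1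
  have hsplit : (∑ t ∈ Finset.Ico k k', eN (delOne y k') t)
      + ∑ t ∈ Finset.Ico k' (m - 1), eN (delOne y k') t
      = ∑ t ∈ Finset.Ico k (m - 1), eN (delOne y k') t :=
    Finset.sum_Ico_consecutive _ hkk (by omega)
  constructor
  · omega
  · linarith

lemma N_le {m : ℕ} (y : Fin m → Bool) (k k' : ℕ) :
    (∑ t ∈ Finset.Ico k k', eN (delOne y k') t) ≤ k' - k := by
  calc (∑ t ∈ Finset.Ico k k', eN (delOne y k') t)
      ≤ (Finset.Ico k k').card • 1 :=
        Finset.sum_le_card_nsmul _ _ 1 fun t _ => eN_le_one _ _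
    _ = k' - k := by simp [Nat.card_Ico]

lemma bits_VT {m : ℕ} (x y : Fin m → Bool) (k k' : ℕ) (hkk : k ≤ k') (hk' : k' < m)
    (hdel : delOne x k = delOne y k')
    (hW : Ww x ≡ Ww y [MOD m + 1]) :
    eN x k = eN y k' := by
  obtain ⟨_, hw⟩ := core_eqs x y k k' hkk hk' hdel
  set N := ∑ t ∈ Finset.Ico k k', eN (delOne y k') t with hN
  have hNle : N ≤ k' - k := N_le y k k'
  have hβ := eN_le_one x k
  have hβ' := eN_le_one y k'
  by_contra hne
  have hcases : (eN x k = 1 ∧ eN y k' = 0) ∨ (eN x k = 0 ∧ eN y k' = 1) := by omega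
  rcases hcases with ⟨h1, h2⟩ | ⟨h1, h2⟩
  · rw [h1, h2] at hw
    simp only [mul_zero, mul_one, add_zero] at hw
    -- hw : Ww x = Ww y + (k+1) + N
    have hle : Ww y ≤ Ww x := by omega
    have hd := (Nat.modEq_iff_dvd' hle).mp hW.symm
    have he : Ww x - Ww y = (k + 1) + N := by omega
    rw [he] at hd
    have := Nat.le_of_dvd (by omega) hd
    omega
  · rw [h1, h2] at hw
    simp only [mul_zero, mul_one, add_zero] at hw
    -- hw : Ww x + (k'+1) = Ww y + N
    have hle : Ww x ≤ Ww y := by omega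
    have hd := (Nat.modEq_iff_dvd' hle).mp hW
    have he : Ww y - Ww x = (k' + 1) - N := by omega
    rw [he] at hd
    have := Nat.le_of_dvd (by omega) hd
    omega

lemma bits_parity {m : ℕ} (x y : Fin m → Bool) (k k' : ℕ) (hkk : k ≤ k') (hk' : k' < m)
    (hdel : delOne x k = delOne y k')
    (hS : Sw x ≡ Sw y [MOD 2]) :
    eN x k = eN y k' := by
  obtain ⟨hs, _⟩ := core_eqs x y k k' hkk hk' hdel
  have hβ := eN_le_one x k
  have hβ' := eN_le_one y k'
  by_contra hne
  have hcases : (eN x k = 1 ∧ eN y k' = 0) ∨ (eN x k = 0 ∧ eN y k' = 1) := by omega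
  rcases hcases with ⟨h1, h2⟩ | ⟨h1, h2⟩
  · rw [h1, h2] at hs
    have hle : Sw y ≤ Sw x := by omega
    have hd := (Nat.modEq_iff_dvd' hle).mp hS.symm
    have he : Sw x - Sw y = 1 := by omega
    rw [he] at hd
    have := Nat.le_of_dvd (by omega) hd
    omega
  · rw [h1, h2] at hs
    have hle : Sw x ≤ Sw y := by omega
    have hd := (Nat.modEq_iff_dvd' hle).mp hS
    have he : Sw y - Sw x = 1 := by omega
    rw [he] at hd
    have := Nat.le_of_dvd (by omega) hd
    omega

end BurstAux

namespace BurstAux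

lemma toNat_eq_zero {b : Bool} (h : b.toNat = 0) : b = false := by cases b <;> simp_all
lemma toNat_eq_one {b : Bool} (h : b.toNat = 1) : b = true := by cases b <;> simp_all

lemma reconstruct {m : ℕ} (x y : Fin m → Bool) (k k' : ℕ) (hkk : k ≤ k') (hk' : k' < m)
    (hdel : delOne x k = delOne y k') (c : Bool)
    (hxk : x ⟨k, lt_of_le_of_lt hkk hk'⟩ = c) (hyk : y ⟨k', hk'⟩ = c)
    (hmidy : ∀ t (h : t < m), k ≤ t → t < k' → y ⟨t, h⟩ = c) :
    x = y ∧ ∀ t (h : t < m), k ≤ t → t ≤ k' → x ⟨t, h⟩ = c := by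
  have hpt : ∀ t (ht : t < m - 1),
      (if t < k then x ⟨t, by omega⟩ else x ⟨t + 1, by omega⟩)
        = (if t < k' then y ⟨t, by omega⟩ else y ⟨t + 1, by omega⟩) := by
    intro t ht
    have h := congrFun hdel (⟨t, ht⟩ : Fin (m - 1))
    simpa [delOne] using h
  have hxconst : ∀ t (h : t < m), k ≤ t → t ≤ k' → x ⟨t, h⟩ = c := by
    intro t h h1 h2
    rcases Nat.lt_or_ge k t with hlt | hge
    · have hpt' := hpt (t - 1) (by omega)
      rw [if_neg (by omega), if_pos (by omega)] at hpt'
      have e1 : (⟨t - 1 + 1, by omega⟩ : Fin m) = ⟨t, h⟩ := Fin.ext (by simp; omega)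
      rw [e1] at hpt'
      rw [hpt']
      exact hmidy (t - 1) (by omega) (by omega) (by omega)
    · have e1 : (⟨t, h⟩ : Fin m) = ⟨k, lt_of_le_of_lt hkk hk'⟩ := Fin.ext (by simp; omega)
      rw [e1]; exact hxk
  refine ⟨funext fun t => ?_, hxconst⟩
  obtain ⟨tv, htv⟩ := t
  rcases Nat.lt_or_ge tv k with h1 | h1
  · have hpt' := hpt tv (by omega)
    rw [if_pos h1, if_pos (by omega)] at hpt'
    exact hpt'
  · rcases Nat.lt_or_ge k' tv with h2 | h2
    · have hpt' := hpt (tv - 1) (by omega)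
      rw [if_neg (by omega), if_neg (by omega)] at hpt'
      have e1 : (⟨tv - 1 + 1, by omega⟩ : Fin m) = ⟨tv, htv⟩ := Fin.ext (by simp; omega)
      rw [e1] at hpt'
      exact hpt'
    · rw [hxconst tv htv h1 h2]
      rcases Nat.lt_or_ge tv k' with h3 | h3
      · exact (hmidy tv htv h1 h3).symm
      · have e1 : (⟨tv, htv⟩ : Fin m) = ⟨k', hk'⟩ := Fin.ext (by simp; omega)
        rw [e1]; exact hyk.symm

lemma correct_of_bits {m : ℕ} (x y : Fin m → Bool) (k k' : ℕ) (hkk : k ≤ k') (hk' : k' < m)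
    (hdel : delOne x k = delOne y k') (M : ℕ) (hM : k' - k < M)
    (hbit : eN x k = eN y k')
    (hW : Ww x ≡ Ww y [MOD M]) :
    x = y ∧ ∃ c : Bool, ∀ t (h : t < m), k ≤ t → t ≤ k' → x ⟨t, h⟩ = c := by
  have hk : k < m := lt_of_le_of_lt hkk hk'
  obtain ⟨_, hw⟩ := core_eqs x y k k' hkk hk' hdel
  set N := ∑ t ∈ Finset.Ico k k', eN (delOne y k') t with hN
  have hNle : N ≤ k' - k := N_le y k k'
  have hβ := eN_le_one x k
  have hDpt : ∀ t, k ≤ t → t < k' → ∀ h : t < m,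
      eN (delOne y k') t = (y ⟨t, h⟩).toNat := by
    intro t h1 h2 h
    rw [delOne_eN y k' t (by omega), if_pos h2, eN_lt y t h]
  rcases Nat.eq_zero_or_pos (eN x k) with hb0 | hb1
  · -- deleted bits are false
    have hb0' : eN y k' = 0 := hbit ▸ hb0
    rw [hb0, hb0'] at hw
    simp only [mul_zero, add_zero] at hw
    have hle : Ww y ≤ Ww x := by omega
    have hd := (Nat.modEq_iff_dvd' hle).mp hW.symm
    have he : Ww x - Ww y = N := by omega
    rw [he] at hd
    have hN0 : N = 0 := Nat.eq_zero_of_dvd_of_lt hd (by omega)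
    have hterm := Finset.sum_eq_zero_iff.mp (hN ▸ hN0)
    have hxk : x ⟨k, hk⟩ = false := toNat_eq_zero (by rw [← eN_lt x k hk]; exact hb0)
    have hyk : y ⟨k', hk'⟩ = false := toNat_eq_zero (by rw [← eN_lt y k' hk']; exact hb0')
    have hmidy : ∀ t (h : t < m), k ≤ t → t < k' → y ⟨t, h⟩ = false := by
      intro t h h1 h2
      have := hterm t (Finset.mem_Ico.mpr ⟨h1, h2⟩)
      rw [hDpt t h1 h2 h] at this
      exact toNat_eq_zero this
    obtain ⟨hxy, hc⟩ := reconstruct x y k k' hkk hk' hdel false hxk hyk hmidy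
    exact ⟨hxy, false, hc⟩
  · -- deleted bits are true
    have hb1 : eN x k = 1 := by omega
    have hb1' : eN y k' = 1 := hbit ▸ hb1
    rw [hb1, hb1'] at hw
    simp only [mul_one] at hw
    have hle : Ww x ≤ Ww y := by omega
    have hd := (Nat.modEq_iff_dvd' hle).mp hW
    have he : Ww y - Ww x = (k' - k) - N := by omega
    rw [he] at hd
    have hN1 : N = k' - k := by
      have := Nat.eq_zero_of_dvd_of_lt hd (by omega)
      omega
    have hterm : ∀ t ∈ Finset.Ico k k', eN (delOne y k') t = 1 := by
      intro t ht
      by_contra h0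
      have h0' : eN (delOne y k') t = 0 := by
        have := eN_le_one (delOne y k') t; omega
      have hsum : (∑ s ∈ (Finset.Ico k k').erase t, eN (delOne y k') s)
          ≤ ((Finset.Ico k k').erase t).card • 1 :=
        Finset.sum_le_card_nsmul _ _ 1 fun s _ => eN_le_one _ _
      have hcard : ((Finset.Ico k k').erase t).card = (k' - k) - 1 := by
        rw [Finset.card_erase_of_mem ht, Nat.card_Ico]
      have hall : N = (∑ s ∈ (Finset.Ico k k').erase t, eN (delOne y k') s) := by
        rw [hN, ← Finset.sum_erase_add _ _ ht, h0', add_zero]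
      have hki : k < k' := by
        obtain ⟨a1, a2⟩ := Finset.mem_Ico.mp ht; omega
      simp only [smul_eq_mul, mul_one] at hsum
      omega
    have hxk : x ⟨k, hk⟩ = true := toNat_eq_one (by rw [← eN_lt x k hk]; exact hb1)
    have hyk : y ⟨k', hk'⟩ = true := toNat_eq_one (by rw [← eN_lt y k' hk']; exact hb1')
    have hmidy : ∀ t (h : t < m), k ≤ t → t < k' → y ⟨t, h⟩ = true := by
      intro t h h1 h2
      have := hterm t (Finset.mem_Ico.mpr ⟨h1, h2⟩)
      rw [hDpt t h1 h2 h] at this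
      exact toNat_eq_one this
    obtain ⟨hxy, hc⟩ := reconstruct x y k k' hkk hk' hdel true hxk hyk hmidy
    exact ⟨hxy, true, hc⟩

end BurstAux

namespace BurstAux

lemma runbound {m P : ℕ} (hP : 2 ≤ P) (x : Fin m → Bool) (hrun : maxRunLe (P - 1) x)
    (k k' : ℕ) (hkk : k ≤ k') (hk' : k' < m) (c : Bool)
    (hc : ∀ t (h : t < m), k ≤ t → t ≤ k' → x ⟨t, h⟩ = c) :
    k' - k ≤ P - 2 := by
  by_contra h
  have hge : k + (P - 1) ≤ k' := by omega
  obtain ⟨j, hj, hne⟩ := hrun k (by omega)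
  exact hne (by
    rw [hc (k + j) (by omega) (by omega) (by omega), hc k (by omega) (by omega) (by omega)])

lemma VT_correct {m P a : ℕ} (hP : 2 ≤ P) (x y : Fin m → Bool)
    (hx : x ∈ VT m a) (hy : y ∈ VT m a) (hrun : maxRunLe (P - 1) x)
    (k k' : ℕ) (hkk : k ≤ k') (hk' : k' < m)
    (hdel : delOne x k = delOne y k') :
    x = y ∧ k' - k ≤ P - 2 := by
  have hW : Ww x ≡ Ww y [MOD m + 1] := by
    have hx' : Ww x ≡ a [MOD m + 1] := by rw [← Ww_spec]; exact hx
    have hy' : Ww y ≡ a [MOD m + 1] := by rw [← Ww_spec]; exact hy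
    exact hx'.trans hy'.symm
  have hbit := bits_VT x y k k' hkk hk' hdel hW
  obtain ⟨hxy, c, hc⟩ := correct_of_bits x y k k' hkk hk' hdel (m + 1) (by omega) hbit hW
  exact ⟨hxy, runbound hP x hrun k k' hkk hk' c hc⟩

lemma SVT_correct {m P c d : ℕ} (x y : Fin m → Bool)
    (hx : x ∈ SVT m P c d) (hy : y ∈ SVT m P c d)
    (k k' : ℕ) (hkk : k ≤ k') (hk' : k' < m) (hM : k' - k < P)
    (hdel : delOne x k = delOne y k') : x = y := by
  obtain ⟨hxw, hxs⟩ := hx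
  obtain ⟨hyw, hys⟩ := hy
  have hS : Sw x ≡ Sw y [MOD 2] := by
    rw [← Sw_spec, ← Sw_spec]
    exact hxs.trans hys.symm
  have hW : Ww x ≡ Ww y [MOD P] := by
    rw [← Ww_spec, ← Ww_spec]
    exact hxw.trans hyw.symm
  have hbit := bits_parity x y k k' hkk hk' hdel hS
  exact (correct_of_bits x y k k' hkk hk' hdel P hM hbit hW).1

lemma rows_ext {n b : ℕ} (hb : 0 < b) (hdvd : b ∣ n) (x y : Fin n → Bool)
    (h : ∀ r : Fin b, arrRow b x r = arrRow b y r) : x = y := by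
  have hmb : n / b * b = n := Nat.div_mul_cancel hdvd
  funext t
  have hr : (t : ℕ) % b < b := Nat.mod_lt _ hb
  have hj : (t : ℕ) / b < n / b := by
    rw [Nat.div_lt_iff_lt_mul hb, hmb]
    exact t.isLt
  have := congrFun (h ⟨(t : ℕ) % b, hr⟩) ⟨(t : ℕ) / b, hj⟩
  simp only [arrRow] at this
  have he : (t : ℕ) / b * b + (t : ℕ) % b = (t : ℕ) := by
    rw [mul_comm]
    exact Nat.div_add_mod _ _
  have e1 : t = (⟨(t : ℕ) / b * b + (t : ℕ) % b, by rw [he]; exact t.isLt⟩ : Fin n) :=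
    Fin.ext he.symm
  rw [e1]
  exact this

end BurstAux

namespace BurstAux

lemma kchar {b i r : ℕ} (hb : 0 < b) (hr : r < b) (j : ℕ) :
    j * b + r < i ↔ j < (i + b - 1 - r) / b := by
  have h := Nat.le_div_iff_mul_le (k := b) (x := j + 1) (y := i + b - 1 - r) hb
  have h2 : (j + 1) * b = j * b + b := by ring
  rw [h2] at h
  constructor
  · intro hlt
    have : j + 1 ≤ (i + b - 1 - r) / b := h.mpr (by omega)
    omega
  · intro hlt
    have := h.mp (by omega)
    omega

lemma klt {n b i r : ℕ} (hb : 0 < b) (hmb : n / b * b = n) (hm : 1 ≤ n / b)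
    (hi : i ≤ n - b) (hr : r < b) : (i + b - 1 - r) / b < n / b := by
  have hbn : b ≤ n := by
    calc b = 1 * b := (one_mul b).symm
      _ ≤ n / b * b := Nat.mul_le_mul_right b hm
      _ = n := hmb
  rw [Nat.div_lt_iff_lt_mul hb, hmb]
  omega

lemma kmono {b i r : ℕ} (hb : 0 < b) (hr : r < b) :
    (i + b - 1 - r) / b ≤ (i + b - 1) / b ∧ (i + b - 1) / b ≤ (i + b - 1 - r) / b + 1 := by
  constructor
  · exact Nat.div_le_div_right (by omega)
  · calc (i + b - 1) / b ≤ ((i + b - 1 - r) + b) / b := Nat.div_le_div_right (by omega)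
      _ = (i + b - 1 - r) / b + 1 := Nat.add_div_right _ hb

lemma kmono' {b i : ℕ} (hii : i ≤ i') (hr : r < b) :
    (i + b - 1 - r) / b ≤ (i' + b - 1 - r) / b :=
  Nat.div_le_div_right (by omega)

lemma row_del {n b : ℕ} (hb : 0 < b) (hdvd : b ∣ n)
    (x : Fin n → Bool) (z : Fin (n - b) → Bool)
    (i : ℕ) (hi : i ≤ n - b)
    (hz : ∀ j : Fin (n - b), z j = if (j : ℕ) < i
        then x ⟨(j : ℕ), by have := j.isLt; omega⟩
        else x ⟨(j : ℕ) + b, by have := j.isLt; omega⟩)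
    (r : ℕ) (hr : r < b) :
    delOne (arrRow b x ⟨r, hr⟩) ((i + b - 1 - r) / b)
      = fun t : Fin (n / b - 1) => z ⟨(t : ℕ) * b + r, by
          have hmb : n / b * b = n := Nat.div_mul_cancel hdvd
          have ht : (t : ℕ) + 1 ≤ n / b - 1 := t.isLt
          have h1 : ((t : ℕ) + 1) * b ≤ (n / b - 1) * b :=
            Nat.mul_le_mul_right b ht
          have h2 : (n / b - 1) * b = n / b * b - b := by
            rw [Nat.sub_mul, one_mul]
          have h3 : ((t : ℕ) + 1) * b = (t : ℕ) * b + b := by ring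
          omega⟩ := by
  funext t
  have hmb : n / b * b = n := Nat.div_mul_cancel hdvd
  have ht : (t : ℕ) + 1 ≤ n / b - 1 := t.isLt
  have h1 : ((t : ℕ) + 1) * b ≤ (n / b - 1) * b := Nat.mul_le_mul_right b ht
  have h2 : (n / b - 1) * b = n / b * b - b := by rw [Nat.sub_mul, one_mul]
  have h3 : ((t : ℕ) + 1) * b = (t : ℕ) * b + b := by ring
  have hzt := hz ⟨(t : ℕ) * b + r, by omega⟩
  simp only [delOne, arrRow]
  simp only [Fin.val_mk] at hzt ⊢
  rcases Nat.lt_or_ge ((t : ℕ) * b + r) i with hlt | hge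
  · rw [if_pos hlt] at hzt
    rw [if_pos ((kchar hb hr (t : ℕ)).mp hlt), hzt]
  · rw [if_neg (by omega)] at hzt
    rw [if_neg (fun hcon => absurd ((kchar hb hr (t : ℕ)).mpr hcon) (by omega)), hzt]
    congr 1
    exact Fin.ext (by simp; omega)

end BurstAux

namespace BurstAux

lemma main_half (n b : ℕ) (hb : 0 < b) (hdvd : b ∣ n) (P : ℕ) (hP : 2 ≤ P) (a : ℕ)
    (C1 : Set (Fin (n / b) → Bool))
    (hC1 : ∀ z ∈ C1, z ∈ VT (n / b) a ∧ maxRunLe (P - 1) z)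
    (c d : ℕ)
    (x y : Fin n → Bool)
    (hx1 : arrRow b x ⟨0, hb⟩ ∈ C1)
    (hx2 : ∀ r : Fin b, 1 ≤ (r : ℕ) → arrRow b x r ∈ SVT (n / b) P c d)
    (hy1 : arrRow b y ⟨0, hb⟩ ∈ C1)
    (hy2 : ∀ r : Fin b, 1 ≤ (r : ℕ) → arrRow b y r ∈ SVT (n / b) P c d)
    (z : Fin (n - b) → Bool) (i i' : ℕ) (hi : i ≤ n - b) (hi' : i' ≤ n - b)
    (hzx : ∀ j : Fin (n - b), z j = if (j : ℕ) < i
        then x ⟨(j : ℕ), by have := j.isLt; omega⟩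
        else x ⟨(j : ℕ) + b, by have := j.isLt; omega⟩)
    (hzy : ∀ j : Fin (n - b), z j = if (j : ℕ) < i'
        then y ⟨(j : ℕ), by have := j.isLt; omega⟩
        else y ⟨(j : ℕ) + b, by have := j.isLt; omega⟩)
    (hord : i ≤ i') : x = y := by
  have hmb : n / b * b = n := Nat.div_mul_cancel hdvd
  rcases Nat.eq_zero_or_pos (n / b) with hm0 | hm
  · have hn0 : n = 0 := by rw [hm0, zero_mul] at hmb; omega
    funext t
    exact absurd t.isLt (by omega)
  · have hrow : ∀ (r : ℕ) (hr : r < b),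
        delOne (arrRow b x ⟨r, hr⟩) ((i + b - 1 - r) / b)
          = delOne (arrRow b y ⟨r, hr⟩) ((i' + b - 1 - r) / b) := fun r hr =>
      (row_del hb hdvd x z i hi hzx r hr).trans (row_del hb hdvd y z i' hi' hzy r hr).symm
    have hkk : ∀ r, r < b → (i + b - 1 - r) / b ≤ (i' + b - 1 - r) / b :=
      fun r hr => kmono' hord hr
    have hklt : ∀ r, r < b → (i' + b - 1 - r) / b < n / b :=
      fun r hr => klt hb hmb hm hi' hr
    obtain ⟨hxVT, hxrun⟩ := hC1 _ hx1
    obtain ⟨hyVT, _⟩ := hC1 _ hy1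
    obtain ⟨hrow0, hgap⟩ := VT_correct hP (arrRow b x ⟨0, hb⟩) (arrRow b y ⟨0, hb⟩)
      hxVT hyVT hxrun _ _ (hkk 0 hb) (hklt 0 hb) (hrow 0 hb)
    have hgap' : (i' + b - 1) / b - (i + b - 1) / b ≤ P - 2 := by
      simpa using hgap
    have h00 : (i + b - 1) / b ≤ (i' + b - 1) / b := by
      simpa using hkk 0 hb
    have hrows : ∀ r : Fin b, arrRow b x r = arrRow b y r := by
      intro r
      obtain ⟨rv, hr⟩ := r
      rcases Nat.eq_zero_or_pos rv with h0 | h1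
      · subst h0
        exact hrow0
      · have hk1 := kmono (b := b) (i := i) (r := rv) hb hr
        have hk2 := kmono (b := b) (i := i') (r := rv) hb hr
        have hgap2 : (i' + b - 1 - rv) / b - (i + b - 1 - rv) / b < P := by omega
        exact SVT_correct (arrRow b x ⟨rv, hr⟩) (arrRow b y ⟨rv, hr⟩)
          (hx2 ⟨rv, hr⟩ h1) (hy2 ⟨rv, hr⟩ h1) _ _ (hkk rv hr) (hklt rv hr) hgap2 (hrow rv hr)
    exact rows_ext hb hdvd x y hrows

end BurstAux

/-- the code whose first array row lies in a run-length-limited VT code and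
whose remaining rows lie in `SVT_{c,d}(n/b, P)` is a `b`-burst-deletion-correcting code. -/
theorem construction_is_burst_deletion_correcting (n b : ℕ) (hb : 0 < b) (hdvd : b ∣ n)
    (P : ℕ) (hP : 2 ≤ P) (a : ℕ) (ha : a ≤ n / b)
    (C1 : Set (Fin (n / b) → Bool))
    (hC1 : ∀ z ∈ C1, z ∈ VT (n / b) a ∧ maxRunLe (P - 1) z)
    (c d : ℕ) (hc : c < P) (hd : d < 2) :
    ∀ x ∈ { x : Fin n → Bool |
        arrRow b x ⟨0, hb⟩ ∈ C1 ∧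
        ∀ r : Fin b, 1 ≤ (r : ℕ) → arrRow b x r ∈ SVT (n / b) P c d },
      ∀ y ∈ { x : Fin n → Bool |
        arrRow b x ⟨0, hb⟩ ∈ C1 ∧
        ∀ r : Fin b, 1 ≤ (r : ℕ) → arrRow b x r ∈ SVT (n / b) P c d },
        x ≠ y → delBall b x ∩ delBall b y = ∅ := by
  intro x hx y hy hxy
  obtain ⟨hx1, hx2⟩ := hx
  obtain ⟨hy1, hy2⟩ := hy
  rw [Set.eq_empty_iff_forall_notMem]
  rintro z ⟨⟨i, hi, hzx⟩, ⟨i', hi', hzy⟩⟩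
  rcases le_total i i' with hord | hord
  · exact hxy (BurstAux.main_half n b hb hdvd P hP a C1 hC1 c d x y hx1 hx2 hy1 hy2
      z i i' hi hi' hzx hzy hord)
  · exact hxy (BurstAux.main_half n b hb hdvd P hP a C1 hC1 c d y x hy1 hy2 hx1 hx2
      z i' i hi' hi hzy hzx hord).symm
end

section
/- For every fixed positive integer b there exists n₀ such that for all n ≥ n₀ with b dividing n, there exists a b-burst-deletion-correcting code C ⊆ 𝔽₂ⁿ with |C| ≥ 2ⁿ · b / (2^b · n · (log₂ n)^{b−1}); i.e., its redundancy n − log₂|C| is at most log₂(n) + (b−1)·log₂(log₂ n) + b − log₂(b) bits. -/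
/-!
Write a word of length `n = b m` into a `b × m` array, row `r` collecting the coordinates
`≡ r (mod b)`. A burst of `b` deletions removes exactly one entry of every row, and the removed
columns of any two rows differ by at most one. The code requires the first row to have runs of
length at most `f ≈ log₂ n` and to lie in a Varshamov–Tenengolts code: this corrects its deletion
and locates the burst up to less than `f` columns. Every other row lies in a shifted
Varshamov–Tenengolts code modulo `P = f + 2` with a parity check, which corrects one deletion whose
position is known up to less than `P`. Since `2 ^ f ≥ 4 n`, at least three quarters of all words
satisfy the run-length condition, and the pigeonhole principle over the `(m + 1) (2 P) ^ (b - 1)`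
choices of residues gives a code of the required size.
-/

theorem Bool.toNat_injective : Function.Injective Bool.toNat := by
  intro a b h
  cases a <;> cases b <;> simp_all

namespace BurstDeletion

open Finset

section SingleDeletion

variable {m : ℕ}

-- the sums in the definitions of `VT` and `SVT`
def weight (x : Fin m → Bool) : ℕ := ∑ i : Fin m, (x i).toNat

def checksum (x : Fin m → Bool) : ℕ := ∑ i : Fin m, ((i : ℕ) + 1) * (x i).toNat

def bits (x : Fin m → Bool) (i : ℕ) : ℕ := if h : i < m then (x ⟨i, h⟩).toNat else 0

lemma bits_of_lt (x : Fin m → Bool) {i : ℕ} (h : i < m) : bits x i = (x ⟨i, h⟩).toNat :=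
  dif_pos h

lemma bits_le_one (x : Fin m → Bool) (i : ℕ) : bits x i ≤ 1 := by
  unfold bits
  split
  · exact Bool.toNat_le _
  · exact zero_le_one

lemma weight_eq_sum_bits (x : Fin m → Bool) : weight x = ∑ i ∈ range m, bits x i := by
  rw [← Fin.sum_univ_eq_sum_range]
  exact sum_congr rfl fun i _ => (bits_of_lt x i.isLt).symm

lemma checksum_eq_sum_bits (x : Fin m → Bool) :
    checksum x = ∑ i ∈ range m, (i + 1) * bits x i := by
  rw [← Fin.sum_univ_eq_sum_range (fun i => (i + 1) * bits x i)]
  exact sum_congr rfl fun i _ => by rw [bits_of_lt x i.isLt]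

lemma delOne_apply_of_lt (x : Fin m → Bool) {k : ℕ} (j : Fin (m - 1)) (h : (j : ℕ) < k) :
    delOne x k j = x ⟨j, by omega⟩ :=
  if_pos h

lemma delOne_apply_of_le (x : Fin m → Bool) {k : ℕ} (j : Fin (m - 1)) (h : k ≤ (j : ℕ)) :
    delOne x k j = x ⟨j + 1, by omega⟩ :=
  if_neg (Nat.not_lt.mpr h)

lemma bits_delOne (x : Fin m → Bool) {k : ℕ} (hk : k < m) (j : ℕ) :
    bits (delOne x k) j = if j < k then bits x j else bits x (j + 1) := by
  by_cases hj : j < m - 1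
  · rw [bits_of_lt _ hj]
    split_ifs with hjk
    · rw [delOne_apply_of_lt x ⟨j, hj⟩ hjk, bits_of_lt]
    · rw [delOne_apply_of_le x ⟨j, hj⟩ (by simpa using hjk), bits_of_lt]
  · rw [bits, dif_neg hj, if_neg (by omega), bits, dif_neg (by omega)]

lemma sum_range_eq_sum_range_pred_add {M k : ℕ} (hk : k < M) (g : ℕ → ℕ) :
    ∑ i ∈ range M, g i = ∑ j ∈ range (M - 1), g (if j < k then j else j + 1) + g k := by
  obtain ⟨M, rfl⟩ : ∃ M', M = M' + 1 := ⟨M - 1, by omega⟩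
  rw [Nat.add_sub_cancel, ← sum_range_add_sum_Ico _ (by omega : k ≤ M + 1),
    sum_eq_sum_Ico_succ_bot (by omega), ← sum_Ico_add',
    ← sum_range_add_sum_Ico _ (by omega : k ≤ M)]
  have hlo : ∑ j ∈ range k, g (if j < k then j else j + 1) = ∑ j ∈ range k, g j :=
    sum_congr rfl fun j hj => by rw [if_pos (mem_range.mp hj)]
  have hhi : ∑ j ∈ Ico k M, g (if j < k then j else j + 1) = ∑ j ∈ Ico k M, g (j + 1) :=
    sum_congr rfl fun j hj => by rw [if_neg (not_lt.mpr (mem_Ico.mp hj).1)]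
  rw [hlo, hhi]
  ring

lemma weight_eq_weight_delOne_add (x : Fin m → Bool) {k : ℕ} (hk : k < m) :
    weight x = weight (delOne x k) + (x ⟨k, hk⟩).toNat := by
  rw [weight_eq_sum_bits, weight_eq_sum_bits, sum_range_eq_sum_range_pred_add hk,
    bits_of_lt x hk]
  congr 1
  exact sum_congr rfl fun j _ => by rw [bits_delOne x hk, apply_ite (bits x)]

lemma checksum_eq_checksum_delOne_add (x : Fin m → Bool) {k : ℕ} (hk : k < m) :
    checksum x = checksum (delOne x k) + ∑ j ∈ Ico k (m - 1), bits (delOne x k) j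
      + (k + 1) * (x ⟨k, hk⟩).toNat := by
  rw [checksum_eq_sum_bits, checksum_eq_sum_bits, sum_range_eq_sum_range_pred_add hk,
    bits_of_lt x hk, ← sum_range_add_sum_Ico _ (by omega : k ≤ m - 1),
    ← sum_range_add_sum_Ico _ (by omega : k ≤ m - 1)]
  have hlo : ∑ j ∈ range k,
        ((if j < k then j else j + 1) + 1) * bits x (if j < k then j else j + 1)
      = ∑ j ∈ range k, (j + 1) * bits (delOne x k) j :=
    sum_congr rfl fun j hj => by
      rw [bits_delOne x hk, if_pos (mem_range.mp hj), if_pos (mem_range.mp hj)]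
  have hhi : ∑ j ∈ Ico k (m - 1),
        ((if j < k then j else j + 1) + 1) * bits x (if j < k then j else j + 1)
      = ∑ j ∈ Ico k (m - 1), (j + 1) * bits (delOne x k) j
        + ∑ j ∈ Ico k (m - 1), bits (delOne x k) j := by
    rw [← sum_add_distrib]
    refine sum_congr rfl fun j hj => ?_
    have : ¬ j < k := not_lt.mpr (mem_Ico.mp hj).1
    rw [bits_delOne x hk, if_neg this, if_neg this]
    ring
  rw [hlo, hhi]
  ring

lemma eq_and_forall_eq_of_mul_add_sum_eq {k k' X Y : ℕ} {g : ℕ → ℕ} (hX : X ≤ 1) (hY : Y ≤ 1)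
    (hg : ∀ j, g j ≤ 1) (h : (k + 1) * X + ∑ j ∈ Ico k k', g j = (k' + 1) * Y) :
    X = Y ∧ ∀ j ∈ Ico k k', g j = Y := by
  have hsum : ∑ j ∈ Ico k k', g j ≤ ∑ _j ∈ Ico k k', 1 := sum_le_sum fun j _ => hg j
  rw [sum_const, Nat.card_Ico, smul_eq_mul, mul_one] at hsum
  interval_cases X <;> interval_cases Y
  · exact ⟨rfl, (sum_eq_zero_iff.mp (by omega))⟩
  · omega
  · omega
  · refine ⟨rfl, (sum_eq_sum_iff_of_le fun j _ => hg j).mp ?_⟩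
    rw [sum_const, Nat.card_Ico, smul_eq_mul, mul_one]
    omega

variable {x y : Fin m → Bool} {k k' : ℕ}

lemma checksum_add_eq_of_delOne_eq (hkk' : k ≤ k') (hk' : k' < m)
    (h : delOne x k = delOne y k') :
    checksum x + (k' + 1) * (y ⟨k', hk'⟩).toNat
      = checksum y
        + ((k + 1) * (x ⟨k, by omega⟩).toNat + ∑ j ∈ Ico k k', bits (delOne x k) j) := by
  rw [checksum_eq_checksum_delOne_add x (by omega : k < m), checksum_eq_checksum_delOne_add y hk',
    ← h, ← sum_Ico_consecutive _ hkk' (by omega : k' ≤ m - 1)]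
  ring

lemma weight_add_eq_of_delOne_eq (hk : k < m) (hk' : k' < m) (h : delOne x k = delOne y k') :
    weight x + (y ⟨k', hk'⟩).toNat = weight y + (x ⟨k, hk⟩).toNat := by
  rw [weight_eq_weight_delOne_add x hk, weight_eq_weight_delOne_add y hk', h]
  ring

lemma eq_of_delOne_eq_of_forall_eq (hkk' : k ≤ k') (hk' : k' < m)
    (h : delOne x k = delOne y k') (hxk : x ⟨k, by omega⟩ = y ⟨k', hk'⟩)
    (hz : ∀ j (hj : j < m - 1), k ≤ j → j < k' → delOne x k ⟨j, hj⟩ = y ⟨k', hk'⟩) :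
    x = y ∧ ∀ u : Fin m, k ≤ u → u ≤ k' → x u = y ⟨k', hk'⟩ := by
  -- outside `[k, k']` both words agree with the common word, inside it both are constant
  have hx : ∀ u (hu : u < m), k ≤ u → u ≤ k' → x ⟨u, hu⟩ = y ⟨k', hk'⟩ := by
    intro u hu hku huk'
    rcases hku.eq_or_lt with rfl | hlt
    · exact hxk
    · rw [← hz (u - 1) (by omega) (by omega) (by omega),
        delOne_apply_of_le x ⟨u - 1, by omega⟩ (by simp only; omega)]
      simp only [Nat.sub_add_cancel (by omega : 1 ≤ u)]
  have hy : ∀ u (hu : u < m), k ≤ u → u ≤ k' → y ⟨u, hu⟩ = y ⟨k', hk'⟩ := by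
    intro u hu hku huk'
    rcases huk'.eq_or_lt with rfl | hlt
    · rfl
    · rw [← hz u (by omega) hku hlt, h, delOne_apply_of_lt y ⟨u, by omega⟩ hlt]
  refine ⟨funext fun ⟨u, hu⟩ => ?_, fun u => hx u u.isLt⟩
  by_cases huk : u < k
  · have hx' := delOne_apply_of_lt x ⟨u, by omega⟩ huk
    have hy' := delOne_apply_of_lt y ⟨u, by omega⟩ (by omega : u < k')
    rw [h] at hx'
    exact hx'.symm.trans hy'
  by_cases hku : k' < u
  · have hx' := delOne_apply_of_le x ⟨u - 1, by omega⟩ (by omega : k ≤ u - 1)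
    have hy' := delOne_apply_of_le y ⟨u - 1, by omega⟩ (by omega : k' ≤ u - 1)
    rw [h] at hx'
    simp only [Nat.sub_add_cancel (by omega : 1 ≤ u)] at hx' hy'
    exact hx'.symm.trans hy'
  · rw [hx u hu (by omega) (by omega), hy u hu (by omega) (by omega)]

lemma eq_of_delOne_eq_of_mul_add_sum_eq (hkk' : k ≤ k') (hk' : k' < m)
    (h : delOne x k = delOne y k')
    (hkey : (k + 1) * (x ⟨k, by omega⟩).toNat + ∑ j ∈ Ico k k', bits (delOne x k) j
      = (k' + 1) * (y ⟨k', hk'⟩).toNat) :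
    x = y ∧ ∀ u : Fin m, k ≤ u → u ≤ k' → x u = y ⟨k', hk'⟩ := by
  obtain ⟨hxy, hz⟩ := eq_and_forall_eq_of_mul_add_sum_eq (Bool.toNat_le _) (Bool.toNat_le _)
    (bits_le_one _) hkey
  refine eq_of_delOne_eq_of_forall_eq hkk' hk' h (Bool.toNat_injective hxy)
    fun j hj hkj hjk' => ?_
  have := hz j (mem_Ico.mpr ⟨hkj, hjk'⟩)
  rw [bits_of_lt _ hj] at this
  exact Bool.toNat_injective this

lemma mul_add_sum_modEq_of_checksum_modEq {N : ℕ} (hkk' : k ≤ k') (hk' : k' < m)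
    (h : delOne x k = delOne y k') (hc : checksum x ≡ checksum y [MOD N]) :
    (k + 1) * (x ⟨k, by omega⟩).toNat + ∑ j ∈ Ico k k', bits (delOne x k) j
      ≡ (k' + 1) * (y ⟨k', hk'⟩).toNat [MOD N] := by
  refine Nat.ModEq.add_left_cancel' (checksum y) ?_
  rw [← checksum_add_eq_of_delOne_eq hkk' hk' h]
  exact hc.add_right _

lemma sum_bits_Ico_le (z : Fin m → Bool) (k k' : ℕ) : ∑ j ∈ Ico k k', bits z j ≤ k' - k := by
  simpa using sum_le_sum fun j (_ : j ∈ Ico k k') => bits_le_one z j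

lemma lt_add_of_maxRunLe {f : ℕ} (hx : maxRunLe f x) {c : Bool} (hk' : k' < m)
    (hc : ∀ u : Fin m, k ≤ u → u ≤ k' → x u = c) : k' < k + f := by
  by_contra! hle
  obtain ⟨j, hj, hne⟩ := hx k (by omega)
  exact hne ((hc ⟨k + j, _⟩ (Nat.le_add_right k j) (by change k + j ≤ k'; omega)).trans
    (hc ⟨k, _⟩ le_rfl (by change k ≤ k'; omega)).symm)

lemma eq_of_delOne_eq_of_checksum_modEq_succ_of_le (hkk' : k ≤ k') (hk' : k' < m)
    (h : delOne x k = delOne y k') (hc : checksum x ≡ checksum y [MOD m + 1]) :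
    x = y ∧ ∀ u : Fin m, k ≤ u → u ≤ k' → x u = y ⟨k', hk'⟩ := by
  have hX := mul_le_of_le_one_right (Nat.zero_le (k + 1)) (Bool.toNat_le (x ⟨k, by omega⟩))
  have hY := mul_le_of_le_one_right (Nat.zero_le (k' + 1)) (Bool.toNat_le (y ⟨k', hk'⟩))
  have hA := sum_bits_Ico_le (delOne x k) k k'
  exact eq_of_delOne_eq_of_mul_add_sum_eq hkk' hk' h <|
    (mul_add_sum_modEq_of_checksum_modEq hkk' hk' h hc).eq_of_lt_of_lt (by omega) (by omega)

theorem eq_of_delOne_eq_of_checksum_modEq_succ {f : ℕ} (hx : maxRunLe f x) (hk : k < m)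
    (hk' : k' < m) (h : delOne x k = delOne y k') (hc : checksum x ≡ checksum y [MOD m + 1]) :
    x = y ∧ k < k' + f ∧ k' < k + f := by
  rcases le_total k k' with hkk' | hk'k
  · obtain ⟨hxy, hconst⟩ := eq_of_delOne_eq_of_checksum_modEq_succ_of_le hkk' hk' h hc
    have := lt_add_of_maxRunLe hx hk' hconst
    exact ⟨hxy, by omega, this⟩
  · obtain ⟨rfl, hconst⟩ := eq_of_delOne_eq_of_checksum_modEq_succ_of_le hk'k hk h.symm hc.symm
    have := lt_add_of_maxRunLe hx hk hconst
    exact ⟨rfl, this, by omega⟩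

lemma eq_of_delOne_eq_of_checksum_modEq_of_le {P : ℕ} (hkk' : k ≤ k') (hk' : k' < m)
    (hP : k' < k + P) (h : delOne x k = delOne y k') (hc : checksum x ≡ checksum y [MOD P])
    (hw : weight x ≡ weight y [MOD 2]) : x = y := by
  have hk : k < m := by omega
  have hXY : (x ⟨k, hk⟩).toNat = (y ⟨k', hk'⟩).toNat := by
    refine (Nat.ModEq.add_left_cancel' (weight y) ?_).eq_of_lt_of_lt
      (Bool.toNat_lt _) (Bool.toNat_lt _)
    rw [← weight_add_eq_of_delOne_eq hk hk' h]
    exact hw.add_right _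
  have hkey := mul_add_sum_modEq_of_checksum_modEq hkk' hk' h hc
  rw [← hXY, show (k' + 1) * (x ⟨k, hk⟩).toNat
      = (k + 1) * (x ⟨k, hk⟩).toNat + (k' - k) * (x ⟨k, hk⟩).toNat by
    rw [← add_mul]; congr 1; omega] at hkey
  have hA := sum_bits_Ico_le (delOne x k) k k'
  have hD := mul_le_of_le_one_right (Nat.zero_le (k' - k)) (Bool.toNat_le (x ⟨k, hk⟩))
  -- both sides of the congruence `hkey`, less `(k + 1) x_k`, lie in `[0, k' - k]` and `k' - k < P`
  refine (eq_of_delOne_eq_of_mul_add_sum_eq hkk' hk' h ?_).1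
  rw [← hXY, (Nat.ModEq.add_left_cancel' _ hkey).eq_of_lt_of_lt (by omega) (by omega), ← add_mul]
  congr 1
  omega

theorem eq_of_delOne_eq_of_checksum_modEq {P : ℕ} (hk : k < m) (hk' : k' < m)
    (hkP : k' < k + P) (hk'P : k < k' + P) (h : delOne x k = delOne y k')
    (hc : checksum x ≡ checksum y [MOD P]) (hw : weight x ≡ weight y [MOD 2]) : x = y := by
  rcases le_total k k' with hkk' | hk'k
  · exact eq_of_delOne_eq_of_checksum_modEq_of_le hkk' hk' hkP h hc hw
  · exact (eq_of_delOne_eq_of_checksum_modEq_of_le hk'k hk hk'P h.symm hc.symm hw.symm).symm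

end SingleDeletion

section Interleaving

variable {b n : ℕ}

lemma mul_add_lt_of_lt_div {j r : ℕ} (hj : j < n / b) (hr : r < b) : j * b + r < n := by
  have := Nat.mul_le_mul_right b (Nat.succ_le_of_lt hj)
  rw [Nat.succ_mul] at this
  have := Nat.div_mul_le_self n b
  omega

lemma mul_add_lt_sub (hbn : b ∣ n) {j r : ℕ} (hj : j < n / b - 1) (hr : r < b) :
    j * b + r < n - b := by
  have := Nat.mul_le_mul_right b (Nat.succ_le_of_lt hj)
  rw [Nat.succ_mul, Nat.sub_mul, one_mul, Nat.div_mul_cancel hbn] at this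
  omega

def rowEmb (b : ℕ) [NeZero b] (r : Fin b) : Fin (n / b) ↪ Fin n where
  toFun j := ⟨j * b + r, mul_add_lt_of_lt_div j.isLt r.isLt⟩
  inj' j j' h := Fin.ext <| Nat.eq_of_mul_eq_mul_right (Nat.pos_of_neZero b) <| by
    simpa using congrArg Fin.val h

lemma arrRow_eq_comp_rowEmb [NeZero b] (x : Fin n → Bool) (r : Fin b) :
    arrRow b x r = x ∘ rowEmb b r :=
  rfl

lemma eq_of_forall_arrRow_eq [NeZero b] (hbn : b ∣ n) {x y : Fin n → Bool}
    (h : ∀ r, arrRow b x r = arrRow b y r) : x = y := by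
  funext u
  have hu : u = rowEmb b ⟨u % b, Nat.mod_lt _ (Nat.pos_of_neZero b)⟩
      ⟨u / b, Nat.div_lt_div_of_lt_of_dvd hbn u.isLt⟩ :=
    Fin.ext (Nat.div_add_mod' u b).symm
  rw [hu, ← Function.comp_apply (f := x), ← Function.comp_apply (f := y),
    ← arrRow_eq_comp_rowEmb, ← arrRow_eq_comp_rowEmb, h]

/-- A burst of `b` deletions starting at position `i` deletes, in row `r`, the entry in this
column. -/
def burstCol (b i r : ℕ) : ℕ := i / b + if r < i % b then 1 else 0

lemma lt_burstCol_iff {i j r : ℕ} (hr : r < b) : j < burstCol b i r ↔ j * b + r < i := by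
  have hi := Nat.div_add_mod' i b
  have ht := Nat.mod_lt i (by omega : 0 < b)
  unfold burstCol
  rcases lt_trichotomy j (i / b) with hj | rfl | hj
  · have := Nat.mul_le_mul_right b (Nat.succ_le_of_lt hj)
    rw [Nat.succ_mul] at this
    split_ifs <;> omega
  · split_ifs <;> omega
  · have := Nat.mul_le_mul_right b (Nat.succ_le_of_lt hj)
    rw [Nat.succ_mul] at this
    split_ifs <;> omega

lemma burstCol_lt_div (hbn : b ∣ n) (hbn' : b ≤ n) {i r : ℕ} (hi : i ≤ n - b) (hr : r < b) :
    burstCol b i r < n / b := by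
  have h := (lt_burstCol_iff (i := i) (j := n / b - 1) hr).not
  rw [Nat.sub_mul, one_mul, Nat.div_mul_cancel hbn] at h
  have := (Nat.le_div_iff_mul_le (by omega)).mpr (by omega : 1 * b ≤ n)
  omega

lemma burstCol_mem_Icc (b i r : ℕ) : i / b ≤ burstCol b i r ∧ burstCol b i r ≤ i / b + 1 := by
  unfold burstCol
  split_ifs <;> omega

lemma exists_delOne_arrRow_eq [NeZero b] (hbn : b ∣ n) {x : Fin n → Bool}
    {z : Fin (n - b) → Bool} (hz : z ∈ delBall b x) :
    ∃ i ≤ n - b, ∀ (r : Fin b) (j : Fin (n / b - 1)),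
      delOne (arrRow b x r) (burstCol b i r) j
        = z ⟨j * b + r, mul_add_lt_sub hbn j.isLt r.isLt⟩ := by
  obtain ⟨i, hi, hz⟩ := hz
  refine ⟨i, hi, fun r j => ?_⟩
  rw [hz]
  simp only [delOne, arrRow, lt_burstCol_iff r.isLt]
  split_ifs
  · rfl
  · congr 2
    ring

end Interleaving

def burstCode (b : ℕ) [NeZero b] (n f P a : ℕ) (c d : {r : Fin b // r ≠ 0} → ℕ) :
    Set (Fin n → Bool) :=
  {x | maxRunLe f (arrRow b x 0) ∧ arrRow b x 0 ∈ VT (n / b) a ∧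
    ∀ r : {r : Fin b // r ≠ 0}, arrRow b x r ∈ SVT (n / b) P (c r) (d r)}

theorem eq_of_mem_burstCode {b n f P a : ℕ} [NeZero b] {c d : {r : Fin b // r ≠ 0} → ℕ}
    (hbn : b ∣ n) (hP : f + 2 ≤ P) {x y : Fin n → Bool} {z : Fin (n - b) → Bool}
    (hx : x ∈ burstCode b n f P a c d) (hy : y ∈ burstCode b n f P a c d)
    (hzx : z ∈ delBall b x) (hzy : z ∈ delBall b y) : x = y := by
  rcases Nat.eq_zero_or_pos n with rfl | hn
  · exact Subsingleton.elim x y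
  have hbn' := Nat.le_of_dvd hn hbn
  obtain ⟨i, hi, hxz⟩ := exists_delOne_arrRow_eq hbn hzx
  obtain ⟨i', hi', hyz⟩ := exists_delOne_arrRow_eq hbn hzy
  have hrow (r : Fin b) :
      delOne (arrRow b x r) (burstCol b i r) = delOne (arrRow b y r) (burstCol b i' r) :=
    funext fun j => (hxz r j).trans (hyz r j).symm
  have hcol (i r : ℕ) (hi : i ≤ n - b) (hr : r < b) := burstCol_lt_div hbn hbn' hi hr
  obtain ⟨hrow0, hlt, hlt'⟩ := eq_of_delOne_eq_of_checksum_modEq_succ hx.1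
    (hcol i 0 hi (Nat.pos_of_neZero b)) (hcol i' 0 hi' (Nat.pos_of_neZero b)) (hrow 0)
    (hx.2.1.trans hy.2.1.symm)
  refine eq_of_forall_arrRow_eq hbn fun r => ?_
  rcases eq_or_ne r 0 with rfl | hr
  · exact hrow0
  have := burstCol_mem_Icc b i r
  have := burstCol_mem_Icc b i 0
  have := burstCol_mem_Icc b i' r
  have := burstCol_mem_Icc b i' 0
  have hSVT := fun x (hx : x ∈ burstCode b n f P a c d) => hx.2.2 ⟨r, hr⟩
  -- the deleted columns of row `r` are within one of those of row `0`, hence less than `P` apart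
  exact eq_of_delOne_eq_of_checksum_modEq (hcol i r hi r.isLt) (hcol i' r hi' r.isLt)
    (by omega) (by omega) (hrow r) ((hSVT x hx).1.trans (hSVT y hy).1.symm)
    ((hSVT x hx).2.trans (hSVT y hy).2.symm)

lemma card_mul_two_pow_le_of_eqOn_compl {ι : Type*} [Fintype ι] [DecidableEq ι] (S : Finset ι)
    {s : Finset (ι → Bool)} (h : ∀ x ∈ s, ∀ y ∈ s, (∀ i ∉ S, x i = y i) → x = y) :
    s.card * 2 ^ S.card ≤ 2 ^ Fintype.card ι := by
  have hinj : s.card ≤ (univ : Finset ({i // i ∉ S} → Bool)).card :=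
    card_le_card_of_injOn (fun x i => x i) (fun _ _ => mem_coe.mpr (mem_univ _))
      fun x hx y hy hxy => h x hx y hy fun i hi => congrFun hxy ⟨i, hi⟩
  rw [card_univ, Fintype.card_fun, Fintype.card_bool, Fintype.card_subtype_compl,
    Fintype.card_coe] at hinj
  calc s.card * 2 ^ S.card ≤ 2 ^ (Fintype.card ι - S.card) * 2 ^ S.card :=
        Nat.mul_le_mul_right _ hinj
    _ = 2 ^ Fintype.card ι := by rw [← pow_add, Nat.sub_add_cancel (card_le_univ S)]

section Counting

open scoped Classical

/-- Each possible start of a run of length `f + 1` leaves only `n - f` free coordinates. -/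
lemma card_not_maxRunLe_comp_mul_le {m n f : ℕ} (e : Fin m ↪ Fin n) :
    (univ.filter fun x : Fin n → Bool => ¬ maxRunLe f (x ∘ e)).card * 2 ^ f ≤ m * 2 ^ n := by
  let W (i : Fin m) : Finset (Fin n → Bool) := univ.filter fun x =>
    (i : ℕ) + f < m ∧ ∀ j : Fin m, (i : ℕ) ≤ j → (j : ℕ) ≤ i + f → x (e j) = x (e i)
  have hbad : (univ.filter fun x : Fin n → Bool => ¬ maxRunLe f (x ∘ e)) ⊆ univ.biUnion W := by
    intro x hx
    simp only [maxRunLe, mem_filter, mem_univ, true_and, Function.comp_apply] at hx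
    push Not at hx
    obtain ⟨i, hi, hrun⟩ := hx
    refine mem_biUnion.mpr ⟨⟨i, by omega⟩, mem_univ _, mem_filter.mpr ⟨mem_univ _, hi, ?_⟩⟩
    intro j hij hjf
    change i ≤ (j : ℕ) at hij
    change (j : ℕ) ≤ i + f at hjf
    have := hrun (j - i) (by omega)
    rwa [show (⟨i + (j - i), _⟩ : Fin m) = j from Fin.ext (by simp only; omega)] at this
  have hW (i : Fin m) : (W i).card * 2 ^ f ≤ 2 ^ n := by
    by_cases hi : (i : ℕ) + f < m
    · have hS := Fin.card_Ioc i ⟨i + f, hi⟩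
      simp only [Nat.add_sub_cancel_left] at hS
      have := card_mul_two_pow_le_of_eqOn_compl ((Ioc i ⟨i + f, hi⟩).map e) (s := W i) ?_
      · rwa [card_map, hS, Fintype.card_fin] at this
      intro x hx y hy hxy
      simp only [W, mem_filter, mem_univ, true_and] at hx hy
      have hei : x (e i) = y (e i) := hxy _ fun h => by simp at h
      funext p
      by_cases hp : p ∈ (Ioc i ⟨i + f, hi⟩).map e
      · obtain ⟨j, hj, rfl⟩ := mem_map.mp hp
        simp only [mem_Ioc, Fin.le_def, Fin.lt_def] at hj
        rw [hx.2 j hj.1.le hj.2, hy.2 j hj.1.le hj.2, hei]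
      · exact hxy p hp
    · simp [W, hi]
  calc _ ≤ (univ.biUnion W).card * 2 ^ f := Nat.mul_le_mul_right _ (card_le_card hbad)
    _ ≤ (∑ i, (W i).card) * 2 ^ f := Nat.mul_le_mul_right _ card_biUnion_le
    _ = ∑ i, (W i).card * 2 ^ f := sum_mul _ _ _
    _ ≤ m * 2 ^ n := by simpa using sum_le_card_nsmul univ _ _ fun i _ => hW i

lemma three_mul_two_pow_le_four_mul_card_maxRunLe (b : ℕ) [NeZero b] {n f : ℕ}
    (hf : 4 * n ≤ 2 ^ f) :
    3 * 2 ^ n ≤ 4 * (univ.filter fun x : Fin n → Bool => maxRunLe f (arrRow b x 0)).card := by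
  have hsplit := card_filter_add_card_filter_not (s := (univ : Finset (Fin n → Bool)))
    fun x => maxRunLe f (arrRow b x 0)
  rw [card_univ, Fintype.card_fun, Fintype.card_bool, Fintype.card_fin] at hsplit
  have hbad := card_not_maxRunLe_comp_mul_le (f := f) (rowEmb (n := n) b 0)
  have hbad' : 4 * (univ.filter fun x : Fin n → Bool => ¬ maxRunLe f (arrRow b x 0)).card
      ≤ 2 ^ n := by
    refine Nat.le_of_mul_le_mul_right ?_ (Nat.two_pow_pos f)
    calc _ = 4 * ((univ.filter fun x : Fin n → Bool => ¬ maxRunLe f (x ∘ rowEmb b 0)).card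
          * 2 ^ f) := by rw [mul_assoc]; rfl
      _ ≤ 4 * (n / b * 2 ^ n) := Nat.mul_le_mul_left 4 hbad
      _ ≤ 4 * n * 2 ^ n := by rw [← mul_assoc]; gcongr; exact Nat.div_le_self n b
      _ ≤ 2 ^ n * 2 ^ f := by rw [mul_comm (2 ^ n)]; exact Nat.mul_le_mul_right _ hf
  omega

lemma exists_card_maxRunLe_le_mul_ncard_burstCode (b : ℕ) [NeZero b] (n f : ℕ) {P : ℕ}
    (hP : 0 < P) :
    ∃ a c d, ((univ.filter fun x : Fin n → Bool => maxRunLe f (arrRow b x 0)).card : ℝ)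
      ≤ ((n / b + 1) * P ^ (b - 1) * 2 ^ (b - 1) : ℕ) * (burstCode b n f P a c d).ncard := by
  set s := univ.filter fun x : Fin n → Bool => maxRunLe f (arrRow b x 0)
  let t := range (n / b + 1) ×ˢ Fintype.piFinset (fun _ : {r : Fin b // r ≠ 0} => range P)
    ×ˢ Fintype.piFinset (fun _ : {r : Fin b // r ≠ 0} => range 2)
  let σ (x : Fin n → Bool) : ℕ × ({r : Fin b // r ≠ 0} → ℕ) × ({r : Fin b // r ≠ 0} → ℕ) :=
    (checksum (arrRow b x 0) % (n / b + 1), fun r => checksum (arrRow b x r) % P,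
      fun r => weight (arrRow b x r) % 2)
  have hσ : ∀ x ∈ s, σ x ∈ t := fun x _ => by
    simp [σ, t, Fintype.mem_piFinset, Nat.mod_lt _ hP, Nat.lt_succ_iff.mp (Nat.mod_lt _ _)]
  have hcard : t.card = (n / b + 1) * P ^ (b - 1) * 2 ^ (b - 1) := by
    simp [t, card_product, Fintype.card_piFinset, Fintype.card_subtype_compl, mul_assoc]
  have htpos : 0 < t.card := by rw [hcard]; positivity
  obtain ⟨⟨a, c, d⟩, -, hfib⟩ := exists_le_card_fiber_of_nsmul_le_card_of_maps_to hσ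
    (card_pos.mp htpos) (b := (s.card : ℝ) / t.card)
    (by rw [nsmul_eq_mul, mul_div_cancel₀ _ (by positivity)])
  refine ⟨a, c, d, ?_⟩
  have hsub : ((s.filter fun x => σ x = (a, c, d) : Finset _) : Set (Fin n → Bool))
      ⊆ burstCode b n f P a c d := by
    intro x hx
    simp only [coe_filter, Set.mem_ofPred_eq, s, mem_filter, mem_univ, true_and, σ,
      Prod.mk.injEq] at hx
    obtain ⟨hrun, rfl, rfl, rfl⟩ := hx
    exact ⟨hrun, (Nat.mod_modEq _ _).symm, fun r => ⟨(Nat.mod_modEq _ _).symm,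
      (Nat.mod_modEq _ _).symm⟩⟩
  have hfib' := hfib.trans (Nat.cast_le.mpr
    ((Set.ncard_coe_finset _).symm.trans_le (Set.ncard_le_ncard hsub (Set.toFinite _))))
  rw [← hcard]
  calc (s.card : ℝ) = t.card * (s.card / t.card) := by field_simp
    _ ≤ t.card * (burstCode b n f P a c d).ncard :=
      mul_le_mul_of_nonneg_left hfib' (Nat.cast_nonneg _)

lemma exists_three_quarters_le_mul_ncard_burstCode (b : ℕ) [NeZero b] {n f P : ℕ}
    (hf : 4 * n ≤ 2 ^ f) (hP : 0 < P) :
    ∃ a c d, 3 / 4 * (2 : ℝ) ^ n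
      ≤ ((n / b + 1) * P ^ (b - 1) * 2 ^ (b - 1) : ℕ) * (burstCode b n f P a c d).ncard := by
  obtain ⟨a, c, d, hcode⟩ := exists_card_maxRunLe_le_mul_ncard_burstCode b n f hP
  refine ⟨a, c, d, le_trans ?_ hcode⟩
  have := three_mul_two_pow_le_four_mul_card_maxRunLe b hf
  rw [div_mul_eq_mul_div, div_le_iff₀ four_pos, mul_comm _ (4 : ℝ)]
  exact_mod_cast this

end Counting

section Estimates

lemma natCast_le_logb_two {k n : ℕ} (h : 2 ^ k ≤ n) : (k : ℝ) ≤ Real.logb 2 n := by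
  have hn : (0 : ℝ) < n := by exact_mod_cast (Nat.two_pow_pos k).trans_le h
  rw [Real.le_logb_iff_rpow_le one_lt_two hn, Real.rpow_natCast]
  exact_mod_cast h

lemma add_pow_le_exp_mul_pow {L c : ℝ} (hL : 0 < L) (hc : 0 ≤ c) (k : ℕ) :
    (L + c) ^ k ≤ Real.exp (k * c / L) * L ^ k := by
  have h : L + c ≤ L * Real.exp (c / L) := by
    calc L + c = L * (1 + c / L) := by rw [mul_add, mul_div_cancel₀ _ hL.ne', mul_one]
      _ ≤ L * Real.exp (c / L) := by gcongr; linarith [Real.add_one_le_exp (c / L)]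
  calc (L + c) ^ k ≤ (L * Real.exp (c / L)) ^ k := by gcongr
    _ = Real.exp (k * c / L) * L ^ k := by
      rw [mul_pow, ← Real.exp_nat_mul, mul_div_assoc, mul_comm]

lemma add_five_pow_le {L : ℝ} {k : ℕ} (hL : 60 * (k : ℝ) ≤ L) (hLpos : 0 < L) :
    (L + 5) ^ k ≤ 6 / 5 * L ^ k := by
  have hsmall : (k : ℝ) * 5 / L ≤ 1 / 12 := by
    rw [div_le_iff₀ hLpos]
    linarith
  calc (L + 5) ^ k ≤ Real.exp (k * 5 / L) * L ^ k := add_pow_le_exp_mul_pow hLpos (by norm_num) k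
    _ ≤ Real.exp (1 / 12) * L ^ k := by gcongr
    _ ≤ 1 / (1 - 1 / 12) * L ^ k := by
        gcongr
        exact (Real.exp_bound_div_one_sub_of_interval' (by norm_num) (by norm_num)).le
    _ ≤ 6 / 5 * L ^ k := mul_le_mul_of_nonneg_right (by norm_num) (by positivity)

lemma card_residues_mul_le {b n : ℕ} (hb : 0 < b) (hbn : b ∣ n) (hn : 2 ^ (60 * b) ≤ n) :
    (((n / b + 1) * (Nat.log 2 n + 5) ^ (b - 1) * 2 ^ (b - 1) : ℕ) : ℝ) * b
      ≤ 3 / 4 * (2 ^ b * n * Real.logb 2 n ^ (b - 1)) := by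
  set L := Real.logb 2 n
  have hL : 60 * (b : ℝ) ≤ L := by exact_mod_cast natCast_le_logb_two hn
  have hbR : (1 : ℝ) ≤ b := by exact_mod_cast hb
  have h4b : 4 * b ≤ n := calc
    4 * b ≤ 2 ^ 2 * 2 ^ b := Nat.mul_le_mul_left _ Nat.lt_two_pow_self.le
    _ = 2 ^ (b + 2) := by ring
    _ ≤ 2 ^ (60 * b) := Nat.pow_le_pow_right two_pos (by omega)
    _ ≤ n := hn
  have hrows : ((n / b : ℕ) + 1 : ℝ) * b ≤ 5 / 4 * n := by
    rw [Nat.cast_div hbn (by positivity), add_mul, div_mul_cancel₀ _ (by positivity)]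
    have : 4 * (b : ℝ) ≤ n := by exact_mod_cast h4b
    linarith
  have hpow : ((Nat.log 2 n + 5 : ℕ) : ℝ) ^ (b - 1) ≤ 6 / 5 * L ^ (b - 1) := by
    have hlog : (Nat.log 2 n : ℝ) ≤ L := natCast_le_logb_two (Nat.pow_log_le_self 2 (by omega))
    have hb1 : ((b - 1 : ℕ) : ℝ) ≤ b := by exact_mod_cast Nat.sub_le b 1
    calc ((Nat.log 2 n + 5 : ℕ) : ℝ) ^ (b - 1) ≤ (L + 5) ^ (b - 1) := by push_cast; gcongr
      _ ≤ 6 / 5 * L ^ (b - 1) := add_five_pow_le (by linarith) (by linarith)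
  have h2b : (2 : ℝ) ^ b = 2 * 2 ^ (b - 1) := by rw [← pow_succ', Nat.sub_add_cancel hb]
  calc (((n / b + 1) * (Nat.log 2 n + 5) ^ (b - 1) * 2 ^ (b - 1) : ℕ) : ℝ) * b
      = (((n / b : ℕ) + 1 : ℝ) * b) * ((Nat.log 2 n + 5 : ℕ) : ℝ) ^ (b - 1) * 2 ^ (b - 1) := by
        push_cast; ring
    _ ≤ (5 / 4 * n) * (6 / 5 * L ^ (b - 1)) * 2 ^ (b - 1) := by gcongr
    _ = 3 / 4 * (2 ^ b * n * L ^ (b - 1)) := by rw [h2b]; ring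

end Estimates

end BurstDeletion

open BurstDeletion

/-- for every fixed `b` and all sufficiently large `n` divisible by `b`,
there is a `b`-burst-deletion-correcting code with
`|C| ≥ 2ⁿ·b/(2^b·n·(log₂ n)^{b−1})`, i.e., redundancy at most
`log₂ n + (b−1)·log₂ log₂ n + b − log₂ b`. -/
theorem exists_good_burst_deletion_code (b : ℕ) (hb : 0 < b) :
    ∃ n₀ : ℕ, ∀ n : ℕ, n₀ ≤ n → b ∣ n →
      ∃ C : Set (Fin n → Bool),
        (∀ x ∈ C, ∀ y ∈ C, x ≠ y → delBall b x ∩ delBall b y = ∅) ∧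
        (C.ncard : ℝ) ≥
          (2 : ℝ) ^ n * (b : ℝ) /
            ((2 : ℝ) ^ b * (n : ℝ) * (Real.logb 2 (n : ℝ)) ^ (b - 1)) := by
  have : NeZero b := ⟨hb.ne'⟩
  refine ⟨2 ^ (60 * b), fun n hn hbn => ?_⟩
  have hf : 4 * n ≤ 2 ^ (Nat.log 2 n + 3) := by
    have := Nat.lt_pow_succ_log_self one_lt_two n
    rw [pow_succ] at this
    rw [pow_add]
    omega
  obtain ⟨a, c, d, hcode⟩ :=
    exists_three_quarters_le_mul_ncard_burstCode b hf (P := Nat.log 2 n + 5) (by omega)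
  refine ⟨burstCode b n (Nat.log 2 n + 3) (Nat.log 2 n + 5) a c d, fun x hx y hy hxy => ?_, ?_⟩
  · exact Set.eq_empty_of_forall_notMem fun z hz =>
      hxy (eq_of_mem_burstCode hbn le_rfl hx hy hz.1 hz.2)
  have hrate := card_residues_mul_le hb hbn hn
  have hlog : 0 < Real.logb 2 n := lt_of_lt_of_le (by positivity) (natCast_le_logb_two hn)
  have hnR : (0 : ℝ) < n := by exact_mod_cast (Nat.two_pow_pos _).trans_le hn
  rw [ge_iff_le, div_le_iff₀ (by positivity)]
  linarith [mul_le_mul_of_nonneg_right hcode (Nat.cast_nonneg b),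
    mul_le_mul_of_nonneg_left hrate (Nat.cast_nonneg (burstCode b n (Nat.log 2 n + 3)
      (Nat.log 2 n + 5) a c d).ncard)]
end
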